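/- arXiv:2511.15094 — 2 statements merged into one kernel-verified Lean document; each statement's English description precedes it below -/
import Mathlib

section
/- The number of Richardson tableaux of size n equals the n-th Motzkin number M_n. -/
/-- Motzkin numbers. -/
def motzkin : ℕ → ℕ
  | 0 => 1
  | 1 => 1
  | n + 2 => motzkin (n+1) + ∑ k ∈ (Finset.range (n+1)).attach,
      motzkin k.1 * motzkin (n - k.1)
decreasing_by
  · omega
  · have := k.2; simp only [Finset.mem_range] at this; omega
  · have := k.2; simp only [Finset.mem_range] at this; omega

/-- A partial matching on `[n]`: a set partition of `Fin n` with blocks of size 1 or 2. -/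
def IsPartialMatching (n : ℕ) (P : Finset (Finset (Fin n))) : Prop :=
  (∀ B ∈ P, B.card = 1 ∨ B.card = 2) ∧ ∀ i : Fin n, ∃! B, B ∈ P ∧ i ∈ B

/-- Noncrossing condition for a partial matching given by its blocks. -/
def IsNoncrossing (n : ℕ) (P : Finset (Finset (Fin n))) : Prop :=
  ¬ ∃ i1 i2 j1 j2 : Fin n, i1 < i2 ∧ i2 < j1 ∧ j1 < j2 ∧
      ({i1, j1} : Finset (Fin n)) ∈ P ∧ ({i2, j2} : Finset (Fin n)) ∈ P

/-- Noncrossing condition for an involution (arcs are pairs `(i, w i)` with `i < w i`). -/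
def PermNoncrossing {n : ℕ} (w : Equiv.Perm (Fin n)) : Prop :=
  ¬ ∃ i1 i2 j1 j2 : Fin n, i1 < i2 ∧ i2 < j1 ∧ j1 < j2 ∧ w i1 = j1 ∧ w i2 = j2

/-- The permutation `w` corresponds to the partial matching `P`. -/
def Agrees (n : ℕ) (P : Finset (Finset (Fin n))) (w : Equiv.Perm (Fin n)) : Prop :=
  ∀ i j : Fin n, (({i, j} : Finset (Fin n)) ∈ P ↔ w i = j)

/-- Direct sum of two permutations. -/
def dsum {m k : ℕ} (u : Equiv.Perm (Fin m)) (v : Equiv.Perm (Fin k)) :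
    Equiv.Perm (Fin (m + k)) :=
  finSumFinEquiv.symm.trans ((Equiv.sumCongr u v).trans finSumFinEquiv)

/-- A permutation is prime if it is not a direct sum of two smaller (nonempty) permutations. -/
def PermPrime {n : ℕ} (w : Equiv.Perm (Fin n)) : Prop :=
  ¬ ∃ (m k : ℕ) (_ : 0 < m) (_ : 0 < k) (h : m + k = n)
      (u : Equiv.Perm (Fin m)) (v : Equiv.Perm (Fin k)),
      w = (finCongr h).permCongr (dsum u v)

/-- Size-labelled permutations and direct sum of a list of them. -/
def sigSum (L : List ((m : ℕ) × Equiv.Perm (Fin m))) : ℕ := (L.map Sigma.fst).sum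

def dsumList : (L : List ((m : ℕ) × Equiv.Perm (Fin m))) → Equiv.Perm (Fin (sigSum L))
  | [] => 1
  | ⟨m, u⟩ :: t =>
      (finCongr (by simp [sigSum] : m + sigSum t = sigSum (⟨m, u⟩ :: t))).permCongr
        (dsum u (dsumList t))

/-- Schensted row insertion of `x` into a tableau given as a list of rows. -/
def rsInsertRow (x : ℕ) : List (List ℕ) → List (List ℕ)
  | [] => [[x]]
  | r :: rest =>
    match r.findIdx? (fun y => decide (x < y)) with
    | none => (r ++ [x]) :: rest
    | some i => r.set i x :: rsInsertRow (r.getD i 0) rest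

/-- RS insertion tableau of a word. -/
def insertionTableau (w : List ℕ) : List (List ℕ) := w.foldl (fun T x => rsInsertRow x T) []

/-- The one-line word (with entries in `{1, …, n}`) of a permutation of `Fin n`. -/
def permWord {n : ℕ} (w : Equiv.Perm (Fin n)) : List ℕ := List.ofFn (fun i => (w i).val + 1)

/-- RS insertion tableau of a permutation. -/
def insTab {n : ℕ} (w : Equiv.Perm (Fin n)) : List (List ℕ) := insertionTableau (permWord w)

/-- `T` is a standard Young tableau of size `n`, with entries `1, …, n`, rows listed
top to bottom. -/
def IsSYT (n : ℕ) (T : List (List ℕ)) : Prop :=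
  (∀ r ∈ T, r ≠ [] ∧ r.Pairwise (· < ·)) ∧
  (∀ i, (T.getD (i+1) []).length ≤ (T.getD i []).length) ∧
  (∀ i c, c < (T.getD (i+1) []).length → (T.getD i []).getD c 0 < (T.getD (i+1) []).getD c 0) ∧
  T.flatten.Perm (List.range' 1 n)

/-- The Richardson condition: for each entry `j` in row `r+1` (0-indexed), the largest
entry smaller than `j` in row `r` exceeds every other entry smaller than `j` lying in
row `r+1` or below. -/
def IsRichardson (T : List (List ℕ)) : Prop :=
  ∀ r j, j ∈ T.getD (r+1) [] →
    ∃ y ∈ T.getD r [], y < j ∧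
      ∀ r' x, r < r' → x ∈ T.getD r' [] → x < j → x < y

/-- Add `m` to every entry of a tableau. -/
def shiftTab (m : ℕ) (T : List (List ℕ)) : List (List ℕ) := T.map (List.map (· + m))

/-- Concatenation of tableaux: append corresponding rows. -/
def concatTab (T T' : List (List ℕ)) : List (List ℕ) :=
  (List.range (max T.length T'.length)).map (fun i => T.getD i [] ++ T'.getD i [])

/-- The first row index where `T'` is longer than `T` (for `T'` obtained from `T` by
adding one box, this is the row of the new box). -/
def addRowIdx (T T' : List (List ℕ)) : ℕ :=
  (List.range T'.length).findIdx (fun r => decide ((T.getD r []).length < (T'.getD r []).length))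

/-- Place a new box with entry `x` at the end of row `r`. -/
def placeAt (T : List (List ℕ)) (r x : ℕ) : List (List ℕ) :=
  if r < T.length then T.set r (T.getD r [] ++ [x]) else T ++ [[x]]

/-- The Robinson–Schensted pair (insertion tableau, recording tableau) of a word. -/
def rsPair (w : List ℕ) : List (List ℕ) × List (List ℕ) :=
  (w.zip (List.range w.length)).foldl
    (fun PQ xi =>
      let P' := rsInsertRow xi.1 PQ.1
      (P', placeAt PQ.2 (addRowIdx PQ.1 P') (xi.2 + 1)))
    ([], [])

def setEntry (T : List (List ℕ)) (r c x : ℕ) : List (List ℕ) :=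
  T.set r ((T.getD r []).set c x)

/-- Jeu de taquin slide of an empty box at `(r, c)` to an outer corner; `fuel` bounds
the number of steps, and at the end the vacated box is erased. -/
def slideAux : ℕ → List (List ℕ) → ℕ → ℕ → List (List ℕ)
  | 0, T, r, c => T.set r ((T.getD r []).eraseIdx c)
  | fuel+1, T, r, c =>
    match (T.getD (r+1) [])[c]?, (T.getD r [])[c+1]? with
    | none, none => T.set r ((T.getD r []).eraseIdx c)
    | some a, none => slideAux fuel (setEntry T r c a) (r+1) c
    | none, some b => slideAux fuel (setEntry T r c b) r (c+1)
    | some a, some b =>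
      if a < b then slideAux fuel (setEntry T r c a) (r+1) c
      else slideAux fuel (setEntry T r c b) r (c+1)

def tabSize (T : List (List ℕ)) : ℕ := (T.map List.length).sum

/-- `Δ(T)`: remove the entry 1 and slide the empty box to an outer corner, then
decrease all entries by 1. -/
def delta (T : List (List ℕ)) : List (List ℕ) :=
  ((slideAux (tabSize T) T 0 0).map (List.map (· - 1))).filter (fun r => !r.isEmpty)

def evacAux : ℕ → List (List ℕ) → List (List ℕ)
  | 0, _ => []
  | n+1, T =>
    let D := delta T
    placeAt (evacAux n D) (addRowIdx D T) (n+1)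

/-- Schützenberger evacuation of a standard Young tableau. -/
def evac (T : List (List ℕ)) : List (List ℕ) := evacAux (tabSize T) T

/-- The (0-indexed) row containing the entry `x`. -/
def rowIdxOf (T : List (List ℕ)) (x : ℕ) : ℕ := T.findIdx (fun r => decide (x ∈ r))

/-- `comaj`: the sum of the ascents of a standard tableau of size `n`, where
`i ∈ [n-1]` is an ascent if `i+1` lies in the same row as `i` or a row above. -/
def comaj (n : ℕ) (T : List (List ℕ)) : ℕ :=
  ∑ i ∈ Finset.Icc 1 (n-1), if rowIdxOf T (i+1) ≤ rowIdxOf T i then i else 0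

/-- The length of column `c` (0-indexed). -/
def colLen (T : List (List ℕ)) (c : ℕ) : ℕ :=
  (T.filter (fun r => decide (c < r.length))).length

/-- The number of odd columns of `T`. -/
def oddColCount (T : List (List ℕ)) : ℕ :=
  ((List.range ((T.getD 0 []).length)).filter (fun c => decide (colLen T c % 2 = 1))).length

/-- Every column of `T` has an even number of boxes. -/
def AllColsEven (T : List (List ℕ)) : Prop := ∀ c, colLen T c % 2 = 0

open Polynomial in
/-- The `q`-integer `[m]_q = 1 + q + ⋯ + q^{m-1}` as a polynomial in `q = X`. -/
noncomputable def qInt (m : ℕ) : Polynomial ℤ := ∑ i ∈ Finset.range m, X ^ i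

/-- The `q`-factorial `[m]_q!`. -/
noncomputable def qFact : ℕ → Polynomial ℤ
  | 0 => 1
  | m+1 => qFact m * qInt (m+1)

/-- A Dyck word with `2n` steps: `true` is an up step, `false` a down step. -/
def IsDyckWord (n : ℕ) (D : List Bool) : Prop :=
  D.length = 2*n ∧ (∀ k, (D.take k).count false ≤ (D.take k).count true) ∧
    D.count false = D.count true

/-- `maj` of a Dyck word: the sum of positions `i` (1-indexed) such that step `i`
is a down step and step `i+1` is an up step. -/
def dyckMaj (D : List Bool) : ℕ :=
  ∑ i ∈ Finset.Icc 1 (D.length - 1),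
    if D.getD (i-1) true = false ∧ D.getD i false = true then i else 0

/-- A Motzkin path with `n` steps, recorded by its step heights `1`, `-1`, `0`. -/
def IsMotzkinPath (n : ℕ) (s : Fin n → ℤ) : Prop :=
  (∀ i, s i = 1 ∨ s i = -1 ∨ s i = 0) ∧
  (∀ k : ℕ, 0 ≤ ∑ i ∈ Finset.univ.filter (fun i : Fin n => i.val < k), s i) ∧
  (∑ i, s i = 0)

/-- A partial matching on blocks is prime if no proper prefix `[0, m)` is a
union of blocks. -/
def MatchingPrime (n : ℕ) (P : Finset (Finset (Fin n))) : Prop :=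
  ¬ ∃ m, 0 < m ∧ m < n ∧ ∀ B ∈ P, (∀ i ∈ B, i.val < m) ∨ (∀ i ∈ B, m ≤ i.val)

/-- Product of Motzkin numbers over gaps between consecutive entries of a list. -/
def gapProd (l : List ℕ) : ℕ :=
  ((l.zip l.tail).map (fun p => motzkin (p.2 - p.1 - 1))).prod
namespace RichW

def step (S : List ℕ) (x : ℕ) : List ℕ := x :: S.filter (fun y => decide (x < y))

def okStep (S : List ℕ) (x : ℕ) : Prop := x = 0 ∨ ∃ y ∈ S, y + 1 = x

def Ok (S : List ℕ) : List ℕ → Prop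
  | [] => True
  | x :: t => okStep S x ∧ Ok (step S x) t

lemma mem_step {S : List ℕ} {x y : ℕ} : y ∈ step S x ↔ y = x ∨ (y ∈ S ∧ x < y) := by
  simp [step, List.mem_filter]

lemma ok_mono : ∀ (w S S' : List ℕ), (∀ y ∈ S, y ∈ S') → Ok S w → Ok S' w := by
  intro w
  induction w with
  | nil => intro S S' _ _; trivial
  | cons x t ih =>
    intro S S' hsub h
    obtain ⟨h1, h2⟩ := h
    refine ⟨?_, ih _ _ ?_ h2⟩
    · rcases h1 with h | ⟨y, hy, hxy⟩
      · exact Or.inl h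
      · exact Or.inr ⟨y, hsub y hy, hxy⟩
    · intro y hy
      rw [mem_step] at hy ⊢
      rcases hy with h | ⟨h1', h2'⟩
      · exact Or.inl h
      · exact Or.inr ⟨hsub y h1', h2'⟩

def mid (d : ℕ) : List ℕ → List ℕ → List ℕ
  | [], v => (d+1) :: v
  | x :: t, v => (if x = d then x + 1 else x) :: mid (max d (x+1)) t v

lemma length_mid (d : ℕ) (t v : List ℕ) : (mid d t v).length = t.length + v.length + 1 := by
  induction t generalizing d with
  | nil => simp [mid]
  | cons x t ih => simp [mid, ih]; omega

/-- letters of an `Ok` word are bounded by state bound + ... -/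
lemma ok_letter_le {S : List ℕ} {x : ℕ} {d : ℕ} (h : okStep S x) (hS : ∀ y ∈ S, y < d) :
    x ≤ d := by
  rcases h with rfl | ⟨y, hy, rfl⟩
  · omega
  · exact hS y hy

lemma ok_mid : ∀ (t v Su Sw : List ℕ) (d : ℕ),
    (∀ y, y + 1 < d → (y ∈ Su ↔ y ∈ Sw)) → (d - 1) ∈ Su → 0 < d → d ∈ Sw →
    (∀ y ∈ Su, y < d) → (∀ y ∈ Sw, y ≤ d) → Ok Su t → Ok [] v → Ok Sw (mid d t v) := by
  intro t
  induction t with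
  | nil =>
    intro v Su Sw d _ _ _ hdSw hbu hbw _ hv
    refine ⟨Or.inr ⟨d, hdSw, rfl⟩, ?_⟩
    refine ok_mono _ _ _ ?_ hv
    intro y hy; simp at hy
  | cons x t ih =>
    intro v Su Sw d hagree hd1 hdpos hdSw hbu hbw hu hv
    obtain ⟨hx, hu2⟩ := hu
    have hxd : x ≤ d := ok_letter_le hx hbu
    by_cases hcase : x = d
    · subst hcase
      rw [mid, if_pos rfl]
      refine ⟨Or.inr ⟨x, hdSw, rfl⟩, ?_⟩
      have hstu : step Su x = [x] := by
        simp only [step, List.cons.injEq, true_and]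
        apply List.filter_eq_nil_iff.2
        intro y hy
        simp only [decide_eq_true_eq]
        exact fun hlt => absurd (hbu y hy) (by omega)
      have hstw : step Sw (x+1) = [x+1] := by
        simp only [step, List.cons.injEq, true_and]
        apply List.filter_eq_nil_iff.2
        intro y hy
        simp only [decide_eq_true_eq]
        exact fun hlt => absurd (hbw y hy) (by omega)
      rw [hstw]
      have hmax : max x (x+1) = x + 1 := by omega
      rw [hmax]
      rw [hstu] at hu2
      refine ih v [x] [x+1] (x+1) ?_ ?_ (by omega) ?_ ?_ ?_ hu2 hv
      · intro y hy; simp; omega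
      · simp
      · simp
      · intro y hy; simp at hy; omega
      · intro y hy; simp at hy; omega
    · have hxlt : x < d := by omega
      rw [mid, if_neg hcase]
      have hmax : max d (x+1) = d := by omega
      rw [hmax]
      have hxw : okStep Sw x := by
        rcases hx with rfl | ⟨y, hy, rfl⟩
        · exact Or.inl rfl
        · exact Or.inr ⟨y, (hagree y (by omega)).1 hy, rfl⟩
      refine ⟨hxw, ih v (step Su x) (step Sw x) d ?_ ?_ hdpos ?_ ?_ ?_ hu2 hv⟩
      · intro y hy
        rw [mem_step, mem_step]
        constructor
        · rintro (rfl | ⟨h1, h2⟩)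
          · exact Or.inl rfl
          · exact Or.inr ⟨(hagree y hy).1 h1, h2⟩
        · rintro (rfl | ⟨h1, h2⟩)
          · exact Or.inl rfl
          · exact Or.inr ⟨(hagree y hy).2 h1, h2⟩
      · rw [mem_step]
        rcases Nat.lt_or_ge x (d-1) with h | h
        · exact Or.inr ⟨hd1, by omega⟩
        · have : x = d - 1 := by omega
          exact Or.inl (by omega)
      · rw [mem_step]; exact Or.inr ⟨hdSw, hxlt⟩
      · intro y hy; rw [mem_step] at hy
        rcases hy with rfl | ⟨h1, _⟩
        · exact hxlt
        · exact hbu y h1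
      · intro y hy; rw [mem_step] at hy
        rcases hy with rfl | ⟨h1, _⟩
        · omega
        · exact hbw y h1

lemma ok_decomp : ∀ (X L : List ℕ) (d : ℕ), 0 < d → (∀ y ∈ L, y < d) →
    Ok (L ++ [d]) X →
    Ok L X ∨ ∃ t v, X = mid d t v ∧
      Ok (L.filter (fun y => decide (y < d - 1)) ++ [d-1]) t ∧ Ok [] v := by
  intro X
  induction X with
  | nil => intro L d _ _ _; exact Or.inl trivial
  | cons x X ih =>
    intro L d hdpos hL hok
    obtain ⟨hx, hok2⟩ := hok
    have hxcases : (okStep L x ∧ x < d) ∨ (x = d ∧ d - 1 ∈ L) ∨ x = d + 1 := by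
      rcases hx with h | ⟨y, hy, hxy⟩
      · exact Or.inl ⟨Or.inl h, by omega⟩
      · rcases List.mem_append.1 hy with h | h
        · have := hL y h
          rcases Nat.lt_or_ge (y+1) d with h2 | h2
          · exact Or.inl ⟨Or.inr ⟨y, h, hxy⟩, by omega⟩
          · have : y = d - 1 := by omega
            subst this
            exact Or.inr (Or.inl ⟨by omega, h⟩)
        · simp at h; subst h; exact Or.inr (Or.inr hxy.symm)
    rcases hxcases with ⟨hxL, hxd⟩ | ⟨rfl, hd1⟩ | rfl
    · -- gap case: x < d
      set L' : List ℕ := x :: L.filter (fun z => decide (x < z)) with hL'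
      have hok2' : Ok (L' ++ [d]) X := by
        refine ok_mono _ _ _ ?_ hok2
        intro y hy
        rw [mem_step] at hy
        rcases hy with rfl | ⟨h1, h2⟩
        · exact List.mem_append.2 (Or.inl (List.mem_cons_self))
        · rcases List.mem_append.1 h1 with h | h
          · exact List.mem_append.2 (Or.inl (List.mem_cons.2
              (Or.inr (List.mem_filter.2 ⟨h, by simpa using h2⟩))))
          · exact List.mem_append.2 (Or.inr h)
      have hL'lt : ∀ y ∈ L', y < d := by
        intro y hy
        rcases List.mem_cons.1 hy with rfl | h
        · exact hxd
        · exact hL y (List.mem_of_mem_filter h)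
      rcases ih L' d hdpos hL'lt hok2' with h | ⟨t, v, rfl, hokt, hokv⟩
      · exact Or.inl ⟨hxL, h⟩
      · refine Or.inr ⟨x :: t, v, ?_, ?_, hokv⟩
        · rw [mid, if_neg (by omega)]
          have : max d (x+1) = d := by omega
          rw [this]
        · refine ⟨?_, ?_⟩
          · rcases hxL with rfl | ⟨y, hy, rfl⟩
            · exact Or.inl rfl
            · refine Or.inr ⟨y, List.mem_append.2 (Or.inl (List.mem_filter.2
                ⟨hy, by have := hL y hy; simp; omega⟩)), rfl⟩
          · refine ok_mono _ _ _ ?_ hokt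
            intro y hy
            rcases List.mem_append.1 hy with hy1 | hy2
            · obtain ⟨hyL', hyd⟩ := List.mem_filter.1 hy1
              have hyd' : y < d - 1 := by simpa using hyd
              rw [mem_step]
              rcases List.mem_cons.1 hyL' with rfl | hyf
              · exact Or.inl rfl
              · obtain ⟨hyL, hxy⟩ := List.mem_filter.1 hyf
                have hxy' : x < y := by simpa using hxy
                exact Or.inr ⟨List.mem_append.2 (Or.inl (List.mem_filter.2
                  ⟨hyL, by simpa using hyd'⟩)), hxy'⟩
            · have hyd : y = d - 1 := by simpa using hy2
              subst hyd
              rw [mem_step]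
              by_cases hc : x = d - 1
              · exact Or.inl hc.symm
              · exact Or.inr ⟨List.mem_append.2 (Or.inr (by simp)), by omega⟩
    · -- reattach case: x = d
      refine Or.inl ⟨Or.inr ⟨x - 1, hd1, by omega⟩, ?_⟩
      refine ok_mono _ _ _ ?_ hok2
      intro y hy
      rw [mem_step] at hy ⊢
      rcases hy with rfl | ⟨h1, h2⟩
      · exact Or.inl rfl
      · rcases List.mem_append.1 h1 with h | h
        · exact Or.inr ⟨h, h2⟩
        · simp at h; omega
    · -- extend case: x = d + 1
      have hok2' : Ok ([] ++ [d+1]) X := by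
        refine ok_mono _ _ _ ?_ hok2
        intro y hy
        rw [mem_step] at hy
        simp only [List.nil_append, List.mem_singleton]
        rcases hy with rfl | ⟨h1, h2⟩
        · rfl
        · exfalso
          rcases List.mem_append.1 h1 with h | h
          · have := hL y h; omega
          · simp at h; omega
      rcases ih [] (d+1) (by omega) (by simp) hok2' with h | ⟨t, v, rfl, hokt, hokv⟩
      · exact Or.inr ⟨[], X, rfl, trivial, h⟩
      · refine Or.inr ⟨d :: t, v, ?_, ?_, hokv⟩
        · rw [mid, if_pos rfl]
          have : max d (d+1) = d + 1 := by omega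
          rw [this]
        · refine ⟨Or.inr ⟨d - 1, List.mem_append.2 (Or.inr (by simp)), by omega⟩, ?_⟩
          refine ok_mono _ _ _ ?_ hokt
          intro y hy
          simp only [List.filter_nil, List.nil_append, List.mem_singleton] at hy
          subst hy
          rw [mem_step]
          exact Or.inl rfl


lemma fb_ok : ∀ (w S : List ℕ) (e : ℕ), Ok S w → (∀ y ∈ S, y < e) →
    w.find? (fun x => decide (e ≤ x)) = none ∨ w.find? (fun x => decide (e ≤ x)) = some e := by
  intro w
  induction w with
  | nil => intro S e _ _; exact Or.inl rfl
  | cons x t ih =>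
    intro S e hok hS
    obtain ⟨hx, hok2⟩ := hok
    have hxe : x ≤ e := ok_letter_le hx hS
    by_cases h : e ≤ x
    · right
      have : x = e := by omega
      subst this
      rw [List.find?_cons_of_pos (by simp)]
    · have hstep : ∀ y ∈ step S x, y < e := by
        intro y hy
        rcases mem_step.1 hy with rfl | ⟨h1, _⟩
        · omega
        · exact hS y h1
      have := ih (step S x) e hok2 hstep
      rw [List.find?_cons_of_neg (by simp; omega)]
      exact this

lemma fb_mid : ∀ (t v S : List ℕ) (e : ℕ), Ok S t → (∀ y ∈ S, y < e) →
    (mid e t v).find? (fun x => decide (e ≤ x)) = some (e+1) := by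
  intro t
  induction t with
  | nil =>
    intro v S e _ _
    rw [mid, List.find?_cons_of_pos (by simp)]
  | cons x t ih =>
    intro v S e hok hS
    obtain ⟨hx, hok2⟩ := hok
    have hxe : x ≤ e := ok_letter_le hx hS
    by_cases h : x = e
    · subst h
      rw [mid, if_pos rfl, List.find?_cons_of_pos (by simp)]
    · have hxlt : x < e := by omega
      rw [mid, if_neg h, List.find?_cons_of_neg (by simp; omega)]
      have hmax : max e (x+1) = e := by omega
      rw [hmax]
      refine ih v (step S x) e hok2 ?_
      intro y hy
      rcases mem_step.1 hy with rfl | ⟨h1, _⟩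
      · omega
      · exact hS y h1

lemma mid_inj : ∀ (u u' v v' Su Su' : List ℕ) (d : ℕ),
    Ok Su u → Ok Su' u' → (∀ y ∈ Su, y < d) → (∀ y ∈ Su', y < d) →
    Ok [] v → Ok [] v' → mid d u v = mid d u' v' → u = u' ∧ v = v' := by
  intro u
  induction u with
  | nil =>
    intro u' v v' Su Su' d hu hu' hSu hSu' hv hv' heq
    cases u' with
    | nil =>
      rw [mid, mid] at heq
      exact ⟨rfl, by simpa using heq⟩
    | cons x' t' =>
      exfalso
      obtain ⟨hx', hu'2⟩ := hu'
      have hxe : x' ≤ d := ok_letter_le hx' hSu'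
      rw [mid, mid] at heq
      by_cases h : x' = d
      · subst h
        have hveq : v = mid (x'+1) t' v' := by
          have := List.cons.inj heq
          have hm : max x' (x'+1) = x' + 1 := by omega
          rw [hm] at this
          exact this.2
        have h1 := fb_ok v [] (x'+1) hv (by simp)
        have hstu : ∀ y ∈ step Su' x', y < x' + 1 := by
          intro y hy
          rcases mem_step.1 hy with rfl | ⟨h1, h2⟩
          · omega
          · have := hSu' y h1; omega
        have h2 := fb_mid t' v' (step Su' x') (x'+1) hu'2 hstu
        rw [← hveq] at h2
        rcases h1 with h1 | h1 <;> rw [h1] at h2 <;> simp at h2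
      · have : ¬ (d + 1 = x') := by omega
        rw [if_neg h] at heq
        have := List.cons.inj heq
        omega
  | cons x t ih =>
    intro u' v v' Su Su' d hu hu' hSu hSu' hv hv' heq
    obtain ⟨hx, hu2⟩ := hu
    have hxd : x ≤ d := ok_letter_le hx hSu
    cases u' with
    | nil =>
      exfalso
      rw [mid, mid] at heq
      by_cases h : x = d
      · subst h
        have hveq : v' = mid (x+1) t v := by
          have := List.cons.inj heq
          have hm : max x (x+1) = x + 1 := by omega
          rw [hm] at this
          exact this.2.symm
        have h1 := fb_ok v' [] (x+1) hv' (by simp)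
        have hstu : ∀ y ∈ step Su x, y < x + 1 := by
          intro y hy
          rcases mem_step.1 hy with rfl | ⟨h1, h2⟩
          · omega
          · have := hSu y h1; omega
        have h2 := fb_mid t v (step Su x) (x+1) hu2 hstu
        rw [← hveq] at h2
        rcases h1 with h1 | h1 <;> rw [h1] at h2 <;> simp at h2
      · rw [if_neg h] at heq
        have := List.cons.inj heq
        omega
    | cons x' t' =>
      obtain ⟨hx', hu'2⟩ := hu'
      have hxd' : x' ≤ d := ok_letter_le hx' hSu'
      rw [mid, mid] at heq
      have hheads := List.cons.inj heq
      obtain ⟨hhead, htail⟩ := hheads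
      have hxx : x = x' := by
        by_cases h : x = d <;> by_cases h' : x' = d <;>
          simp [h, h'] at hhead <;> omega
      subst hxx
      have hmax : max d (x+1) = max d (x+1) := rfl
      have hrec := ih t' v v' (step Su x) (step Su' x) (max d (x+1)) hu2 hu'2 ?_ ?_ hv hv' htail
      · exact ⟨by rw [hrec.1], hrec.2⟩
      · intro y hy
        rcases mem_step.1 hy with rfl | ⟨h1, _⟩
        · omega
        · have := hSu y h1; omega
      · intro y hy
        rcases mem_step.1 hy with rfl | ⟨h1, _⟩
        · omega
        · have := hSu' y h1; omega


lemma ok_head {w : List ℕ} (h : Ok [] w) : w.getD 0 0 = 0 := by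
  cases w with
  | nil => rfl
  | cons x t =>
    rcases h.1 with h1 | ⟨y, hy, _⟩
    · simpa using h1
    · simp at hy

lemma getD_mid0 {u v : List ℕ} (h : Ok [] u) : (mid 0 u v).getD 0 0 = 1 := by
  cases u with
  | nil => rfl
  | cons x t =>
    have hx : x = 0 := by
      rcases h.1 with h1 | ⟨y, hy, _⟩
      · exact h1
      · simp at hy
    subst hx
    simp [mid]

lemma ok_phiA {t : List ℕ} (h : Ok [] t) : Ok [] (0 :: t) := by
  refine ⟨Or.inl rfl, ?_⟩
  exact ok_mono _ _ _ (by intro y hy; simp at hy) h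

lemma ok_phiB {u v : List ℕ} (hu : Ok [] u) (hv : Ok [] v) : Ok [] (0 :: mid 0 u v) := by
  refine ⟨Or.inl rfl, ?_⟩
  cases u with
  | nil =>
    show Ok (step [] 0) ((0+1) :: v)
    refine ⟨Or.inr ⟨0, by simp [step], rfl⟩, ?_⟩
    refine ok_mono _ _ _ ?_ hv
    intro y hy; simp at hy
  | cons x t =>
    have hx : x = 0 := by
      rcases hu.1 with h1 | ⟨y, hy, _⟩
      · exact h1
      · simp at hy
    subst hx
    show Ok (step [] 0) (mid 0 (0 :: t) v)
    rw [mid, if_pos rfl]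
    refine ⟨Or.inr ⟨0, by simp [step], rfl⟩, ?_⟩
    have hmax : max 0 (0+1) = 1 := rfl
    rw [hmax]
    have hst : step (step [] 0) (0+1) = [1] := by simp [step]
    rw [hst]
    refine ok_mid t v [0] [1] 1 ?_ ?_ (by omega) ?_ ?_ ?_ hu.2 hv
    · intro y hy; omega
    · simp
    · simp
    · intro y hy; simp at hy; omega
    · intro y hy; simp at hy; omega

lemma ok_letters_lt : ∀ (w S : List ℕ) (c : ℕ), Ok S w → (∀ y ∈ S, y < c) →
    ∀ x ∈ w, x < c + w.length := by
  intro w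
  induction w with
  | nil => intro S c _ _ x hx; simp at hx
  | cons a t ih =>
    intro S c hok hS x hx
    have ha : a ≤ c := ok_letter_le hok.1 hS
    rcases List.mem_cons.1 hx with rfl | hx
    · simp; omega
    · have := ih (step S a) (c+1) hok.2 ?_ x hx
      · simpa [Nat.add_comm, Nat.add_assoc, Nat.add_left_comm] using this
      · intro y hy
        rcases mem_step.1 hy with rfl | ⟨h1, _⟩
        · omega
        · have := hS y h1; omega

def WS (n : ℕ) : Type := {w : List ℕ // w.length = n ∧ Ok [] w}

instance WS.finite (n : ℕ) : Finite (WS n) := by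
  refine Finite.of_injective (fun w : WS n => fun i : Fin n => (⟨w.1.getD i 0, ?_⟩ : Fin (n+1))) ?_
  · have hb := ok_letters_lt w.1 [] 1 w.2.2 (by simp)
    have hilen : (i : ℕ) < w.1.length := by rw [w.2.1]; exact i.2
    have : w.1.getD i 0 ∈ w.1 := by
      rw [List.getD_eq_getElem w.1 0 hilen]
      exact List.getElem_mem _
    have := hb _ this
    rw [w.2.1] at this
    omega
  · intro w w' h
    apply Subtype.ext
    apply List.ext_getElem (by rw [w.2.1, w'.2.1])
    intro i h1 h2
    have hn : i < n := by rw [← w.2.1]; exact h1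
    have := congrFun h ⟨i, hn⟩
    simp only [Fin.mk.injEq] at this
    rwa [List.getD_eq_getElem w.1 0 h1, List.getD_eq_getElem w'.1 0 h2] at this

def bigMap (n : ℕ) :
    (WS (n+1) ⊕ (Σ _k : Fin (n+1), WS _k.1 × WS (n - _k.1))) → WS (n+2) := fun z =>
  match z with
  | Sum.inl t => ⟨0 :: t.1, by simp [t.2.1], ok_phiA t.2.2⟩
  | Sum.inr ⟨k, u, v⟩ => ⟨0 :: mid 0 u.1 v.1, by
      have hk : (k : ℕ) ≤ n := by omega
      simp [length_mid, u.2.1, v.2.1]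
      omega, ok_phiB u.2.2 v.2.2⟩

lemma bigMap_bijective (n : ℕ) : Function.Bijective (bigMap n) := by
  constructor
  · rintro (t | ⟨k, u, v⟩) (t' | ⟨k', u', v'⟩) h <;>
      have h' := congrArg Subtype.val h
    · simp only [bigMap] at h'
      have := (List.cons.inj h').2
      rw [Sum.inl.injEq]
      exact Subtype.ext this
    · exfalso
      simp only [bigMap] at h'
      have hlist := (List.cons.inj h').2
      have h1 : t.1.getD 0 0 = 0 := ok_head t.2.2
      have h2 : (mid 0 u'.1 v'.1).getD 0 0 = 1 := getD_mid0 u'.2.2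
      rw [hlist] at h1
      omega
    · exfalso
      simp only [bigMap] at h'
      have hlist := (List.cons.inj h').2
      have h1 : t'.1.getD 0 0 = 0 := ok_head t'.2.2
      have h2 : (mid 0 u.1 v.1).getD 0 0 = 1 := getD_mid0 u.2.2
      rw [← hlist] at h1
      omega
    · simp only [bigMap] at h'
      have hlist := (List.cons.inj h').2
      obtain ⟨hueq, hveq⟩ := mid_inj u.1 u'.1 v.1 v'.1 [] [] 0 u.2.2 u'.2.2
        (by intro y hy; simp at hy) (by intro y hy; simp at hy) v.2.2 v'.2.2 hlist
      have hkk : k = k' := by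
        apply Fin.ext
        rw [← u.2.1, ← u'.2.1, hueq]
      subst hkk
      rw [Sum.inr.injEq, Sigma.mk.inj_iff]
      refine ⟨rfl, heq_of_eq ?_⟩
      rw [Prod.ext_iff]
      exact ⟨Subtype.ext hueq, Subtype.ext hveq⟩
  · rintro ⟨w, hlen, hok⟩
    match w, hlen with
    | a :: b :: X, hlen =>
    have hXlen : X.length = n := by simpa using hlen
    obtain ⟨ha, hok2⟩ := hok
    have ha0 : a = 0 := by
      rcases ha with h | ⟨y, hy, _⟩
      · exact h
      · simp at hy
    subst ha0
    obtain ⟨hb, hok3⟩ := hok2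
    have hb01 : b = 0 ∨ b = 1 := by
      rcases hb with h | ⟨y, hy, h⟩
      · exact Or.inl h
      · simp [step] at hy
        subst hy
        exact Or.inr h.symm
    rcases hb01 with rfl | rfl
    · -- case A
      have hX : Ok [0] X := by
        refine ok_mono _ _ _ ?_ hok3
        intro y hy
        rcases mem_step.1 hy with rfl | ⟨h1, h2⟩
        · simp
        · simp [step] at h1
          omega
      refine ⟨Sum.inl ⟨0 :: X, by simp [hXlen], ⟨Or.inl rfl, ?_⟩⟩, ?_⟩
      · refine ok_mono _ _ _ ?_ hX
        intro y hy; simp at hy; simp [step, hy]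
      · simp only [bigMap]
        rfl
    · -- case B
      have hX : Ok ([] ++ [1]) X := by
        refine ok_mono _ _ _ ?_ hok3
        intro y hy
        rcases mem_step.1 hy with rfl | ⟨h1, h2⟩
        · simp
        · simp [step] at h1
          rcases h1 with rfl | h1 <;> omega
      rcases ok_decomp X [] 1 (by omega) (by simp) hX with h | ⟨t, v, rfl, hokt, hokv⟩
      · -- u = []
        refine ⟨Sum.inr ⟨⟨0, by omega⟩, ⟨[], rfl, trivial⟩, ⟨X, by simp [hXlen], h⟩⟩, ?_⟩
        simp only [bigMap]
        rfl
      · -- u = 0 :: t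
        have hlen2 : t.length + v.length + 1 = n := by
          rw [length_mid] at hXlen; omega
        have hokt' : Ok [0] t := by
          refine ok_mono _ _ _ ?_ hokt
          intro y hy; simp at hy; simp [hy]
        have hoku : Ok [] (0 :: t) := by
          refine ⟨Or.inl rfl, ?_⟩
          refine ok_mono _ _ _ ?_ hokt'
          intro y hy; simp at hy; simp [step, hy]
        refine ⟨Sum.inr ⟨⟨t.length + 1, by omega⟩, ⟨0 :: t, by simp, hoku⟩,
          ⟨v, by simp; omega, hokv⟩⟩, ?_⟩
        apply Subtype.ext
        show 0 :: mid 0 (0 :: t) v = 0 :: 1 :: mid 1 t v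
        rw [mid, if_pos rfl]
        norm_num

instance WS.finite' (n : ℕ) : Finite {w : List ℕ // w.length = n ∧ Ok [] w} := WS.finite n

lemma nat_card_sigma {m : ℕ} (g : Fin m → Type) [∀ k, Finite (g k)] :
    Nat.card (Σ k, g k) = ∑ k, Nat.card (g k) := by
  classical
  letI : ∀ k, Fintype (g k) := fun k => Fintype.ofFinite _
  simp [Nat.card_eq_fintype_card, Fintype.card_sigma]

lemma card_WS_zero : Nat.card (WS 0) = 1 := by
  rw [Nat.card_eq_one_iff_unique]
  constructor
  · constructor
    rintro ⟨w, h1, h2⟩ ⟨w', h1', h2'⟩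
    apply Subtype.ext
    simp only
    rw [List.length_eq_zero_iff] at h1 h1'
    rw [h1, h1']
  · exact ⟨⟨[], rfl, trivial⟩⟩

lemma card_WS_one : Nat.card (WS 1) = 1 := by
  rw [Nat.card_eq_one_iff_unique]
  constructor
  · constructor
    rintro ⟨w, h1, h2⟩ ⟨w', h1', h2'⟩
    apply Subtype.ext
    simp only
    rw [List.length_eq_one_iff] at h1 h1'
    obtain ⟨a, rfl⟩ := h1
    obtain ⟨a', rfl⟩ := h1'
    have ha : a = 0 := by
      rcases h2.1 with h | ⟨y, hy, _⟩
      · exact h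
      · simp at hy
    have ha' : a' = 0 := by
      rcases h2'.1 with h | ⟨y, hy, _⟩
      · exact h
      · simp at hy
    rw [ha, ha']
  · exact ⟨⟨[0], rfl, Or.inl rfl, trivial⟩⟩

lemma card_WS (n : ℕ) : Nat.card (WS n) = motzkin n := by
  induction n using Nat.strong_induction_on with
  | _ n ih =>
    match n with
    | 0 => rw [card_WS_zero, motzkin]
    | 1 => rw [card_WS_one, motzkin]
    | (m+2) =>
      have hequiv := Equiv.ofBijective _ (bigMap_bijective m)
      have h1 : Nat.card (WS (m+2)) =
          Nat.card (WS (m+1) ⊕ (Σ _k : Fin (m+1), WS _k.1 × WS (m - _k.1))) :=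
        (Nat.card_congr hequiv).symm
      rw [h1, Nat.card_sum]
      rw [nat_card_sigma]
      have h2 : ∀ k : Fin (m+1), Nat.card (WS k.1 × WS (m - k.1)) =
          motzkin k.1 * motzkin (m - k.1) := by
        intro k
        rw [Nat.card_prod, ih k.1 (by omega), ih (m - k.1) (by omega)]
      rw [Finset.sum_congr rfl (fun k _ => h2 k)]
      rw [ih (m+1) (by omega)]
      have h3 : ∑ k : Fin (m+1), motzkin k.1 * motzkin (m - k.1) =
          ∑ k ∈ (Finset.range (m+1)).attach, motzkin k.1 * motzkin (m - k.1) := by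
        rw [Fin.sum_univ_eq_sum_range (fun k => motzkin k * motzkin (m - k))]
        rw [← Finset.sum_attach (Finset.range (m+1)) (fun k => motzkin k * motzkin (m - k))]
      rw [h3]
      rw [motzkin]

/-! ### positional characterization -/

def PRW (w : List ℕ) : Prop := ∀ j, j < w.length → w.getD j 0 = 0 ∨
  ∃ i, i < j ∧ w.getD i 0 + 1 = w.getD j 0 ∧
    ∀ p, i < p → p < j → w.getD p 0 + 1 < w.getD j 0

lemma ok_append (x : ℕ) : ∀ (w S : List ℕ),
    Ok S (w ++ [x]) ↔ Ok S w ∧ okStep (w.foldl step S) x := by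
  intro w
  induction w with
  | nil => intro S; simp [Ok]
  | cons a t ih =>
    intro S
    show okStep S a ∧ Ok (step S a) (t ++ [x]) ↔ _
    rw [ih (step S a)]
    show _ ↔ (okStep S a ∧ Ok (step S a) t) ∧ _
    have : (a :: t).foldl step S = t.foldl step (step S a) := rfl
    rw [this]
    tauto

lemma mem_foldl_step : ∀ (w S : List ℕ) (y : ℕ), y ∈ w.foldl step S ↔
    (∃ i, i < w.length ∧ w.getD i 0 = y ∧ ∀ p, i < p → p < w.length → w.getD p 0 < y) ∨
    (y ∈ S ∧ ∀ p, p < w.length → w.getD p 0 < y) := by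
  intro w
  induction w using List.reverseRecOn with
  | nil =>
    intro S y
    simp
  | append_singleton w x ih =>
    intro S y
    rw [List.foldl_append]
    show y ∈ step (w.foldl step S) x ↔ _
    rw [mem_step, ih]
    have hlen : (w ++ [x]).length = w.length + 1 := by simp
    have hx : (w ++ [x]).getD w.length 0 = x := by
      rw [List.getD_append_right _ _ _ _ (le_refl _)]
      simp
    have hgl : ∀ i, i < w.length → (w ++ [x]).getD i 0 = w.getD i 0 := by
      intro i hi
      exact List.getD_append _ _ _ _ hi
    constructor
    · rintro (rfl | ⟨h1, h2⟩)
      · left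
        refine ⟨w.length, by omega, hx, ?_⟩
        intro p hp1 hp2
        omega
      · rcases h1 with ⟨i, hi, hiy, hgap⟩ | ⟨hyS, hall⟩
        · left
          refine ⟨i, by omega, by rw [hgl i hi]; exact hiy, ?_⟩
          intro p hp1 hp2
          rw [hlen] at hp2
          rcases Nat.lt_or_ge p w.length with h | h
          · rw [hgl p h]; exact hgap p hp1 h
          · have : p = w.length := by omega
            subst this
            rw [hx]; exact h2
        · right
          refine ⟨hyS, ?_⟩
          intro p hp
          rw [hlen] at hp
          rcases Nat.lt_or_ge p w.length with h | h
          · rw [hgl p h]; exact hall p h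
          · have : p = w.length := by omega
            subst this
            rw [hx]; exact h2
    · rintro (⟨i, hi, hiy, hgap⟩ | ⟨hyS, hall⟩)
      · rw [hlen] at hi
        rcases Nat.lt_or_ge i w.length with h | h
        · right
          have hxy : x < y := by
            have := hgap w.length h (by omega)
            rwa [hx] at this
          refine ⟨Or.inl ⟨i, h, by rw [← hgl i h]; exact hiy, ?_⟩, hxy⟩
          intro p hp1 hp2
          rw [← hgl p hp2]
          exact hgap p hp1 (by omega)
        · have : i = w.length := by omega
          subst this
          rw [hx] at hiy
          exact Or.inl hiy.symm
      · right
        have hxy : x < y := by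
          have := hall w.length (by omega)
          rwa [hx] at this
        refine ⟨Or.inr ⟨hyS, ?_⟩, hxy⟩
        intro p hp
        rw [← hgl p hp]
        exact hall p (by omega)

lemma prw_append (w : List ℕ) (x : ℕ) : PRW (w ++ [x]) ↔ PRW w ∧
    (x = 0 ∨ ∃ i, i < w.length ∧ w.getD i 0 + 1 = x ∧
      ∀ p, i < p → p < w.length → w.getD p 0 + 1 < x) := by
  have hlen : (w ++ [x]).length = w.length + 1 := by simp
  have hx : (w ++ [x]).getD w.length 0 = x := by
    rw [List.getD_append_right _ _ _ _ (le_refl _)]; simp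
  have hgl : ∀ i, i < w.length → (w ++ [x]).getD i 0 = w.getD i 0 := fun i hi =>
    List.getD_append _ _ _ _ hi
  constructor
  · intro h
    constructor
    · intro j hj
      rcases h j (by omega) with h1 | ⟨i, hi, hieq, hgap⟩
      · left; rwa [hgl j hj] at h1
      · right
        refine ⟨i, hi, ?_, ?_⟩
        · rwa [hgl i (by omega), hgl j hj] at hieq
        · intro p hp1 hp2
          have := hgap p hp1 (by omega)
          rwa [hgl p (by omega), hgl j hj] at this
    · rcases h w.length (by omega) with h1 | ⟨i, hi, hieq, hgap⟩
      · left; rwa [hx] at h1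
      · right
        refine ⟨i, by omega, ?_, ?_⟩
        · rwa [hgl i (by omega), hx] at hieq
        · intro p hp1 hp2
          have := hgap p hp1 (by omega)
          rwa [hgl p (by omega), hx] at this
  · rintro ⟨h1, h2⟩ j hj
    rw [hlen] at hj
    rcases Nat.lt_or_ge j w.length with h | h
    · rcases h1 j h with ha | ⟨i, hi, hieq, hgap⟩
      · left; rwa [hgl j h]
      · right
        refine ⟨i, hi, ?_, ?_⟩
        · rwa [hgl i (by omega), hgl j h]
        · intro p hp1 hp2
          have := hgap p hp1 hp2
          rwa [hgl p (by omega), hgl j h]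
    · have : j = w.length := by omega
      subst this
      rcases h2 with rfl | ⟨i, hi, hieq, hgap⟩
      · left; rw [hx]
      · right
        refine ⟨i, hi, ?_, ?_⟩
        · rwa [hgl i hi, hx]
        · intro p hp1 hp2
          have := hgap p hp1 (by omega)
          rwa [hgl p (by omega), hx]

lemma prw_iff_ok (w : List ℕ) : PRW w ↔ Ok [] w := by
  induction w using List.reverseRecOn with
  | nil =>
    constructor
    · intro _; trivial
    · intro _ j hj; simp at hj
  | append_singleton w x ih =>
    rw [prw_append, ok_append, ih]
    apply and_congr_right
    intro _
    constructor
    · rintro (rfl | ⟨i, hi, hieq, hgap⟩)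
      · exact Or.inl rfl
      · refine Or.inr ⟨w.getD i 0, ?_, hieq⟩
        rw [mem_foldl_step]
        left
        refine ⟨i, hi, rfl, ?_⟩
        intro p hp1 hp2
        have := hgap p hp1 hp2
        omega
    · rintro (rfl | ⟨y, hy, hyx⟩)
      · exact Or.inl rfl
      · rw [mem_foldl_step] at hy
        rcases hy with ⟨i, hi, hiy, hgap⟩ | ⟨hyS, _⟩
        · right
          refine ⟨i, hi, by omega, ?_⟩
          intro p hp1 hp2
          have := hgap p hp1 hp2
          omega
        · simp at hyS

/-! ### tableaux from words -/

def occ (w : List ℕ) (r : ℕ) : List ℕ :=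
  (List.range w.length).filter (fun j => decide (w.getD j 0 = r))

def rowW (w : List ℕ) (r : ℕ) : List ℕ := (occ w r).map (· + 1)

def numRows (w : List ℕ) : ℕ := w.foldr (fun a b => max (a+1) b) 0

def tabOf (w : List ℕ) : List (List ℕ) := (List.range (numRows w)).map (rowW w)

lemma mem_occ {w : List ℕ} {r j : ℕ} : j ∈ occ w r ↔ j < w.length ∧ w.getD j 0 = r := by
  simp [occ, List.mem_filter, List.mem_range]

lemma occ_pairwise (w : List ℕ) (r : ℕ) : List.Pairwise (· < ·) (occ w r) :=
  List.Pairwise.sublist (List.filter_sublist) (List.pairwise_lt_range)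

lemma occ_nodup (w : List ℕ) (r : ℕ) : (occ w r).Nodup :=
  (occ_pairwise w r).nodup

lemma le_numRows {w : List ℕ} : ∀ x ∈ w, x + 1 ≤ numRows w := by
  induction w with
  | nil => intro x hx; simp at hx
  | cons a t ih =>
    intro x hx
    show x + 1 ≤ max (a+1) (numRows t)
    rcases List.mem_cons.1 hx with rfl | hx
    · omega
    · have := ih x hx; omega

lemma numRows_le {w : List ℕ} {m : ℕ} (h : ∀ x ∈ w, x < m) : numRows w ≤ m := by
  induction w with
  | nil => exact Nat.zero_le m
  | cons a t ih =>
    show max (a+1) (numRows t) ≤ m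
    have h1 := h a (List.mem_cons_self)
    have h2 := ih (fun x hx => h x (List.mem_cons_of_mem _ hx))
    omega

lemma getD_lt_numRows {w : List ℕ} {j : ℕ} (h : j < w.length) :
    w.getD j 0 < numRows w := by
  have : w.getD j 0 ∈ w := by
    rw [List.getD_eq_getElem _ _ h]; exact List.getElem_mem _
  have := le_numRows _ this
  omega

lemma exists_getD_eq_of_lt_numRows {w : List ℕ} (hw : PRW w) :
    ∀ v r, r ≤ v → (∃ j, j < w.length ∧ w.getD j 0 = v) →
      ∃ j, j < w.length ∧ w.getD j 0 = r := by
  intro v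
  induction v with
  | zero =>
    intro r hr h
    have : r = 0 := Nat.le_zero.1 hr
    subst this
    exact h
  | succ v ih =>
    intro r hr h
    rcases Nat.lt_or_ge r (v+1) with hlt | hge
    · obtain ⟨j, hj, hjv⟩ := h
      rcases hw j hj with h0 | ⟨i, hij, hieq, _⟩
      · omega
      · refine ih r (by omega) ⟨i, by omega, by omega⟩
    · have : r = v + 1 := by omega
      subst this
      exact h

lemma numRows_attained : ∀ (w : List ℕ), 0 < numRows w → ∃ x ∈ w, x + 1 = numRows w := by
  intro w
  induction w with
  | nil => intro h; simp [numRows] at h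
  | cons a t ih =>
    intro _
    show ∃ x ∈ a :: t, x + 1 = max (a+1) (numRows t)
    rcases Nat.lt_or_ge (numRows t) (a+1) with h | h
    · exact ⟨a, List.mem_cons_self, by omega⟩
    · have hpos : 0 < numRows t := by omega
      obtain ⟨x, hx, hxe⟩ := ih hpos
      exact ⟨x, List.mem_cons_of_mem _ hx, by omega⟩

lemma occ_ne_nil {w : List ℕ} (hw : PRW w) {r : ℕ} (hr : r < numRows w) :
    occ w r ≠ [] := by
  have hpos : 0 < numRows w := by omega
  obtain ⟨x, hx, hxe⟩ := numRows_attained w hpos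
  obtain ⟨i, hi, hieq⟩ := List.mem_iff_getElem.1 hx
  have hex : ∃ j, j < w.length ∧ w.getD j 0 = numRows w - 1 :=
    ⟨i, hi, by rw [List.getD_eq_getElem _ _ hi]; omega⟩
  obtain ⟨j, hj, hjr⟩ := exists_getD_eq_of_lt_numRows hw (numRows w - 1) r (by omega) hex
  exact List.ne_nil_of_mem (mem_occ.2 ⟨hj, hjr⟩)

/-! ### parent function -/

def pa (w : List ℕ) (j : ℕ) : ℕ :=
  Nat.findGreatest (fun i => w.getD j 0 ≤ w.getD i 0 + 1) (j-1)

lemma pa_spec {w : List ℕ} (hw : PRW w) {j : ℕ} (hj : j < w.length)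
    (hv : w.getD j 0 ≠ 0) :
    pa w j < j ∧ w.getD (pa w j) 0 + 1 = w.getD j 0 ∧
      ∀ p, pa w j < p → p < j → w.getD p 0 + 1 < w.getD j 0 := by
  obtain ⟨i, hij, hieq, hgap⟩ := (hw j hj).resolve_left hv
  have hjpos : 0 < j := by omega
  have hile : i ≤ j - 1 := by omega
  have hP : (fun i => w.getD j 0 ≤ w.getD i 0 + 1) i := by simp only; omega
  unfold pa
  set g := Nat.findGreatest (fun i => w.getD j 0 ≤ w.getD i 0 + 1) (j-1) with hg
  have hspec : w.getD j 0 ≤ w.getD g 0 + 1 :=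
    Nat.findGreatest_spec (P := fun i => w.getD j 0 ≤ w.getD i 0 + 1) hile hP
  have hle : i ≤ g :=
    Nat.le_findGreatest (P := fun i => w.getD j 0 ≤ w.getD i 0 + 1) hile hP
  have hub : g ≤ j - 1 :=
    Nat.findGreatest_le (P := fun i => w.getD j 0 ≤ w.getD i 0 + 1) _
  have hpj : g < j := by omega
  rcases Nat.lt_or_ge i g with hlt | hge
  · exfalso
    have := hgap g hlt hpj
    omega
  · have hieqpa : i = g := by omega
    subst hieqpa
    exact ⟨hpj, hieq, hgap⟩

lemma pa_lt_of_occ {w : List ℕ} (hw : PRW w) {v j j' : ℕ}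
    (hj : j < w.length) (hj' : j' < w.length) (hjj : j < j')
    (hvj : w.getD j 0 = v) (hvj' : w.getD j' 0 = v) (hv : v ≠ 0) :
    j ≤ pa w j' := by
  by_contra hcon
  push_neg at hcon
  obtain ⟨h1, h2, h3⟩ := pa_spec hw hj' (by omega)
  have := h3 j hcon hjj
  omega

/-! ### sorted list counting lemmas -/

lemma sorted_filter_le_length {l : List ℕ} (hl : List.Pairwise (· < ·) l) :
    ∀ c, c < l.length →
      c + 1 ≤ (l.filter (fun a => decide (a ≤ l.getD c 0))).length := by
  induction l with
  | nil => intro c hc; simp at hc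
  | cons h t ih =>
    intro c hc
    rcases List.pairwise_cons.1 hl with ⟨hht, htp⟩
    cases c with
    | zero =>
      have : (h :: t).getD 0 0 = h := rfl
      rw [this]
      rw [List.filter_cons_of_pos (by simp)]
      simp
    | succ c =>
      have hct : c < t.length := by simpa using hc
      have hgd : (h :: t).getD (c+1) 0 = t.getD c 0 := rfl
      rw [hgd]
      have hh : h ≤ t.getD c 0 := by
        have : t.getD c 0 ∈ t := by
          rw [List.getD_eq_getElem _ _ hct]; exact List.getElem_mem _
        exact le_of_lt (hht _ this)
      rw [List.filter_cons_of_pos (by simp only [decide_eq_true_eq]; exact hh)]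
      have := ih htp c hct
      simp only [List.length_cons]
      omega

lemma sorted_getD_lt_of_filter {q : ℕ} : ∀ (l : List ℕ), List.Pairwise (· < ·) l →
    ∀ c, c < (l.filter (fun a => decide (a < q))).length → l.getD c 0 < q := by
  intro l
  induction l with
  | nil => intro _ c hc; simp at hc
  | cons h t ih =>
    intro hl c hc
    rcases List.pairwise_cons.1 hl with ⟨hht, htp⟩
    by_cases hh : h < q
    · rw [List.filter_cons_of_pos (by simp only [decide_eq_true_eq]; exact hh)] at hc
      cases c with
      | zero => exact hh
      | succ c =>
        have : (h :: t).getD (c+1) 0 = t.getD c 0 := rfl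
        rw [this]
        exact ih htp c (by simpa using hc)
    · exfalso
      rw [List.filter_cons_of_neg (by simp only [decide_eq_true_eq]; exact hh)] at hc
      have : t.filter (fun a => decide (a < q)) = [] := by
        apply List.filter_eq_nil_iff.2
        intro a ha
        simp only [decide_eq_true_eq]
        have := hht a ha
        omega
      rw [this] at hc
      simp at hc

/-- list-level injection cardinality: if `f` maps `A` into `B` strictly monotonically
(in particular injectively), then `A.length ≤ B.length` (both nodup). -/
lemma length_le_of_inj {A B : List ℕ} (hA : A.Nodup) (hB : B.Nodup) (f : ℕ → ℕ)
    (hmaps : ∀ a ∈ A, f a ∈ B) (hinj : ∀ a ∈ A, ∀ a' ∈ A, f a = f a' → a = a') :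
    A.length ≤ B.length := by
  classical
  have h1 : A.toFinset.card = A.length := List.toFinset_card_of_nodup hA
  have h2 : B.toFinset.card = B.length := List.toFinset_card_of_nodup hB
  rw [← h1, ← h2]
  apply Finset.card_le_card_of_injOn f
  · intro a ha
    rw [Finset.mem_coe, List.mem_toFinset] at ha ⊢
    exact hmaps a ha
  · intro a ha a' ha' h
    rw [Finset.mem_coe, List.mem_toFinset] at ha ha'
    exact hinj a ha a' ha' h

lemma occ_succ_length_le {w : List ℕ} (hw : PRW w) (r : ℕ) :
    (occ w (r+1)).length ≤ (occ w r).length := by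
  apply length_le_of_inj (occ_nodup w (r+1)) (occ_nodup w r) (pa w)
  · intro a ha
    rw [mem_occ] at ha ⊢
    obtain ⟨h1, h2, _⟩ := pa_spec hw ha.1 (by omega)
    exact ⟨by omega, by omega⟩
  · intro a ha a' ha' h
    rw [mem_occ] at ha ha'
    by_contra hne
    rcases Nat.lt_or_ge a a' with hlt | hge
    · have h1 := pa_lt_of_occ hw ha.1 ha'.1 hlt ha.2 ha'.2 (by omega)
      have h2 := (pa_spec hw ha.1 (by omega)).1
      omega
    · have hlt : a' < a := by omega
      have h1 := pa_lt_of_occ hw ha'.1 ha.1 hlt ha'.2 ha.2 (by omega)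
      have h2 := (pa_spec hw ha'.1 (by omega)).1
      omega

lemma occ_col_lt {w : List ℕ} (hw : PRW w) (r c : ℕ)
    (hc : c < (occ w (r+1)).length) :
    (occ w r).getD c 0 < (occ w (r+1)).getD c 0 := by
  set q := (occ w (r+1)).getD c 0 with hq
  -- first: c + 1 ≤ |occ(r+1) ∩ [≤ q]|
  have h1 : c + 1 ≤ ((occ w (r+1)).filter (fun a => decide (a ≤ q))).length :=
    sorted_filter_le_length (occ_pairwise w (r+1)) c hc
  -- injection into occ r ∩ [< q]
  have h2 : ((occ w (r+1)).filter (fun a => decide (a ≤ q))).length ≤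
      ((occ w r).filter (fun a => decide (a < q))).length := by
    apply length_le_of_inj
      (List.Nodup.sublist (List.filter_sublist) (occ_nodup w (r+1)))
      (List.Nodup.sublist (List.filter_sublist) (occ_nodup w r)) (pa w)
    · intro a ha
      rw [List.mem_filter] at ha ⊢
      obtain ⟨ha1, ha2⟩ := ha
      rw [mem_occ] at ha1
      obtain ⟨hp1, hp2, _⟩ := pa_spec hw ha1.1 (by omega)
      simp only [decide_eq_true_eq] at ha2 ⊢
      refine ⟨mem_occ.2 ⟨by omega, by omega⟩, by omega⟩
    · intro a ha a' ha' h
      rw [List.mem_filter] at ha ha'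
      have ha1 := ha.1; have ha'1 := ha'.1
      rw [mem_occ] at ha1 ha'1
      by_contra hne
      rcases Nat.lt_or_ge a a' with hlt | hge
      · have hx := pa_lt_of_occ hw ha1.1 ha'1.1 hlt ha1.2 ha'1.2 (by omega)
        have hy := (pa_spec hw ha1.1 (by omega)).1
        omega
      · have hlt : a' < a := by omega
        have hx := pa_lt_of_occ hw ha'1.1 ha1.1 hlt ha'1.2 ha1.2 (by omega)
        have hy := (pa_spec hw ha'1.1 (by omega)).1
        omega
  exact sorted_getD_lt_of_filter (occ w r) (occ_pairwise w r) c (by omega)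

/-! ### tabOf is a Richardson SYT -/

lemma length_tabOf (w : List ℕ) : (tabOf w).length = numRows w := by simp [tabOf]

lemma tabOf_getD_lt {w : List ℕ} {r : ℕ} (h : r < numRows w) :
    (tabOf w).getD r [] = rowW w r := by
  have hlen : r < (tabOf w).length := by rw [length_tabOf]; exact h
  rw [List.getD_eq_getElem _ _ hlen]
  simp [tabOf]

lemma tabOf_getD_ge {w : List ℕ} {r : ℕ} (h : numRows w ≤ r) :
    (tabOf w).getD r [] = [] :=
  List.getD_eq_default _ _ (by rw [length_tabOf]; exact h)

lemma length_rowW (w : List ℕ) (r : ℕ) : (rowW w r).length = (occ w r).length := by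
  simp [rowW]

lemma getD_rowW {w : List ℕ} {r c : ℕ} (h : c < (occ w r).length) :
    (rowW w r).getD c 0 = (occ w r).getD c 0 + 1 := by
  have h2 : c < (rowW w r).length := by rw [length_rowW]; exact h
  rw [List.getD_eq_getElem _ _ h2, List.getD_eq_getElem _ _ h]
  simp [rowW]

lemma mem_rowW {w : List ℕ} {r x : ℕ} :
    x ∈ rowW w r ↔ ∃ j, j < w.length ∧ w.getD j 0 = r ∧ x = j + 1 := by
  simp only [rowW, List.mem_map]
  constructor
  · rintro ⟨j, hj, rfl⟩
    rw [mem_occ] at hj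
    exact ⟨j, hj.1, hj.2, rfl⟩
  · rintro ⟨j, h1, h2, rfl⟩
    exact ⟨j, mem_occ.2 ⟨h1, h2⟩, rfl⟩

lemma rowW_pairwise (w : List ℕ) (r : ℕ) : List.Pairwise (· < ·) (rowW w r) := by
  rw [rowW, List.pairwise_map]
  exact (occ_pairwise w r).imp (by omega)

theorem isSYT_tabOf {w : List ℕ} (hw : PRW w) : IsSYT w.length (tabOf w) := by
  refine ⟨?_, ?_, ?_, ?_⟩
  · intro row hrow
    rw [tabOf, List.mem_map] at hrow
    obtain ⟨r, hr, rfl⟩ := hrow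
    rw [List.mem_range] at hr
    constructor
    · intro hnil
      exact occ_ne_nil hw hr (by simpa [rowW, List.map_eq_nil_iff] using hnil)
    · exact rowW_pairwise w r
  · intro i
    rcases Nat.lt_or_ge (i+1) (numRows w) with h | h
    · rw [tabOf_getD_lt h, tabOf_getD_lt (by omega), length_rowW, length_rowW]
      exact occ_succ_length_le hw i
    · rw [tabOf_getD_ge h]
      simp
  · intro i c hc
    rcases Nat.lt_or_ge (i+1) (numRows w) with h | h
    · rw [tabOf_getD_lt h, length_rowW] at hc
      rw [tabOf_getD_lt h, tabOf_getD_lt (by omega)]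
      have hc2 : c < (occ w i).length := lt_of_lt_of_le hc (occ_succ_length_le hw i)
      rw [getD_rowW hc, getD_rowW hc2]
      have := occ_col_lt hw i c hc
      omega
    · rw [tabOf_getD_ge h] at hc
      simp at hc
  · apply List.perm_of_nodup_nodup_toFinset_eq
    · rw [List.nodup_flatten]
      constructor
      · intro l hl
        rw [tabOf, List.mem_map] at hl
        obtain ⟨r, _, rfl⟩ := hl
        exact (rowW_pairwise w r).nodup
      · rw [tabOf, List.pairwise_map]
        refine (List.pairwise_lt_range).imp ?_
        intro r r' hrr x hx hx'
        rw [mem_rowW] at hx hx'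
        obtain ⟨j, _, hj2, rfl⟩ := hx
        obtain ⟨j', _, hj2', he⟩ := hx'
        have : j = j' := by omega
        subst this
        omega
    · exact List.nodup_range' _
    · apply Finset.ext
      intro x
      rw [List.mem_toFinset, List.mem_toFinset, List.mem_flatten, List.mem_range']
      constructor
      · rintro ⟨l, hl, hx⟩
        rw [tabOf, List.mem_map] at hl
        obtain ⟨r, _, rfl⟩ := hl
        rw [mem_rowW] at hx
        obtain ⟨j, hj1, _, rfl⟩ := hx
        exact ⟨j, hj1, by omega⟩
      · rintro ⟨i, hi, rfl⟩
        refine ⟨rowW w (w.getD i 0), ?_, ?_⟩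
        · rw [tabOf, List.mem_map]
          exact ⟨w.getD i 0, List.mem_range.2 (getD_lt_numRows hi), rfl⟩
        · rw [mem_rowW]
          exact ⟨i, hi, rfl, by omega⟩

theorem isRich_tabOf {w : List ℕ} (hw : PRW w) : IsRichardson (tabOf w) := by
  intro r j hj
  rcases Nat.lt_or_ge (r+1) (numRows w) with h | h
  · rw [tabOf_getD_lt h] at hj
    rw [mem_rowW] at hj
    obtain ⟨q, hq1, hq2, rfl⟩ := hj
    obtain ⟨hp1, hp2, hp3⟩ := pa_spec hw hq1 (by omega)
    refine ⟨pa w q + 1, ?_, by omega, ?_⟩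
    · rw [tabOf_getD_lt (by omega), mem_rowW]
      exact ⟨pa w q, by omega, by omega, rfl⟩
    · intro r' x hrr' hx hxj
      rcases Nat.lt_or_ge r' (numRows w) with h' | h'
      · rw [tabOf_getD_lt h'] at hx
        rw [mem_rowW] at hx
        obtain ⟨p, hp1', hp2', rfl⟩ := hx
        -- p < q, w p = r' > r; show p < pa w q
        rcases Nat.lt_or_ge p (pa w q) with hcase | hcase
        · omega
        · exfalso
          rcases Nat.lt_or_ge (pa w q) p with hc2 | hc2
          · have := hp3 p hc2 (by omega)
            omega
          · have : p = pa w q := by omega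
            subst this
            omega
      · rw [tabOf_getD_ge h'] at hx
        simp at hx
  · rw [tabOf_getD_ge h] at hj
    simp at hj

/-! ### word of a tableau -/

def rIdx (T : List (List ℕ)) (x : ℕ) : ℕ := T.findIdx (fun row => decide (x ∈ row))

def wordOf (T : List (List ℕ)) : List ℕ :=
  (List.range T.flatten.length).map (fun j => rIdx T (j+1))

lemma length_wordOf (T : List (List ℕ)) : (wordOf T).length = T.flatten.length := by
  simp [wordOf]

lemma getD_wordOf {T : List (List ℕ)} {j : ℕ} (h : j < T.flatten.length) :
    (wordOf T).getD j 0 = rIdx T (j+1) := by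
  have h2 : j < (wordOf T).length := by rw [length_wordOf]; exact h
  rw [List.getD_eq_getElem _ _ h2]
  simp [wordOf]

lemma mem_flatten_iff_getD {T : List (List ℕ)} {x : ℕ} :
    x ∈ T.flatten ↔ ∃ r, r < T.length ∧ x ∈ T.getD r [] := by
  rw [List.mem_flatten]
  constructor
  · rintro ⟨l, hl, hx⟩
    obtain ⟨r, hr, rfl⟩ := List.mem_iff_getElem.1 hl
    exact ⟨r, hr, by rwa [List.getD_eq_getElem _ _ hr]⟩
  · rintro ⟨r, hr, hx⟩
    exact ⟨T.getD r [], by rw [List.getD_eq_getElem _ _ hr]; exact List.getElem_mem _,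
      hx⟩

lemma rIdx_lt {T : List (List ℕ)} {x : ℕ} (h : x ∈ T.flatten) : rIdx T x < T.length := by
  rw [List.mem_flatten] at h
  obtain ⟨l, hl, hx⟩ := h
  exact List.findIdx_lt_length_of_exists ⟨l, hl, by simpa using hx⟩

lemma rIdx_mem {T : List (List ℕ)} {x : ℕ} (h : x ∈ T.flatten) :
    x ∈ T.getD (rIdx T x) [] := by
  have hlt := rIdx_lt h
  rw [List.getD_eq_getElem _ _ hlt]
  have := List.findIdx_getElem (p := fun row => decide (x ∈ row)) (xs := T) (w := hlt)
  exact of_decide_eq_true this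

lemma rIdx_unique {T : List (List ℕ)} (hnd : T.flatten.Nodup) {x r : ℕ}
    (hr : r < T.length) (hx : x ∈ T.getD r []) : rIdx T x = r := by
  have hxf : x ∈ T.flatten := mem_flatten_iff_getD.2 ⟨r, hr, hx⟩
  have h1 := rIdx_lt hxf
  have h2 := rIdx_mem hxf
  by_contra hne
  have hdisj := (List.nodup_flatten.1 hnd).2
  rw [List.pairwise_iff_getElem] at hdisj
  rcases Nat.lt_or_ge (rIdx T x) r with h | h
  · exact hdisj _ _ h1 hr h (by rwa [← List.getD_eq_getElem _ ([] : List ℕ)] )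
      (by rwa [← List.getD_eq_getElem _ ([] : List ℕ)])
  · have hlt : r < rIdx T x := by omega
    exact hdisj _ _ hr h1 hlt (by rwa [← List.getD_eq_getElem _ ([] : List ℕ)])
      (by rwa [← List.getD_eq_getElem _ ([] : List ℕ)])

theorem prw_wordOf {n : ℕ} {T : List (List ℕ)} (hT : IsSYT n T) (hR : IsRichardson T) :
    PRW (wordOf T) := by
  obtain ⟨hrows, hlens, hcols, hperm⟩ := hT
  have hnd : T.flatten.Nodup := (List.Perm.nodup_iff hperm).2 (List.nodup_range' _)
  have hn : T.flatten.length = n := by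
    have := hperm.length_eq
    simpa using this
  have hmemf : ∀ x, x ∈ T.flatten ↔ 1 ≤ x ∧ x ≤ n := by
    intro x
    rw [hperm.mem_iff, List.mem_range']
    constructor
    · rintro ⟨i, hi, rfl⟩; omega
    · rintro ⟨h1, h2⟩; exact ⟨x - 1, by omega, by omega⟩
  intro j hj
  rw [length_wordOf, hn] at hj
  have hjf : j + 1 ∈ T.flatten := (hmemf _).2 ⟨by omega, by omega⟩
  have hjn : j < T.flatten.length := by omega
  rw [getD_wordOf hjn]
  set v := rIdx T (j+1) with hvdef
  by_cases hv : v = 0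
  · exact Or.inl hv
  · right
    have hvlt : v < T.length := rIdx_lt hjf
    have hjv : j + 1 ∈ T.getD v [] := rIdx_mem hjf
    have hjv' : j + 1 ∈ T.getD ((v-1)+1) [] := by
      have : (v-1)+1 = v := by omega
      rwa [this]
    obtain ⟨y, hy, hylt, hcond⟩ := hR (v-1) (j+1) hjv'
    have hyf : y ∈ T.flatten := mem_flatten_iff_getD.2 ⟨v-1, by omega, hy⟩
    have hy1 : 1 ≤ y := ((hmemf y).1 hyf).1
    have hrIy : rIdx T y = v - 1 := rIdx_unique hnd (by omega) hy
    have hjpos : 0 < j := by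
      rcases Nat.eq_zero_or_pos j with rfl | h
      · omega
      · exact h
    set P := fun i => rIdx T (i+1) = v - 1 with hP
    have hi0P : P (y-1) := by
      have : y - 1 + 1 = y := by omega
      rw [hP]; simp only; rw [this]; exact hrIy
    have hi0le : y - 1 ≤ j - 1 := by omega
    set i := Nat.findGreatest P (j-1) with hidef
    have hiP : P i := Nat.findGreatest_spec hi0le hi0P
    have hige : y - 1 ≤ i := Nat.le_findGreatest hi0le hi0P
    have hile : i ≤ j - 1 := Nat.findGreatest_le _
    have hilt : i < j := by omega
    have hin : i < T.flatten.length := by omega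
    refine ⟨i, hilt, ?_, ?_⟩
    · rw [getD_wordOf hin]
      have h5 : rIdx T (i+1) = v - 1 := hiP
      omega
    · intro p hp1 hp2
      have hpn : p < T.flatten.length := by omega
      rw [getD_wordOf hpn]
      set r' := rIdx T (p+1) with hr'def
      by_contra hcon
      push_neg at hcon
      have hr'ge : v - 1 ≤ r' := by omega
      rcases Nat.eq_or_lt_of_le hr'ge with heq | hlt
      · exact Nat.findGreatest_is_greatest hp1 (by omega) heq.symm
      · have hpf : p + 1 ∈ T.flatten := (hmemf _).2 ⟨by omega, by omega⟩
        have hpx := rIdx_mem hpf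
        have := hcond r' (p+1) (by omega) hpx (by omega)
        omega

/-! ### round trips -/

theorem wordOf_tabOf {w : List ℕ} (hw : PRW w) : wordOf (tabOf w) = w := by
  have hsyt := isSYT_tabOf hw
  have hperm := hsyt.2.2.2
  have hN : (tabOf w).flatten.length = w.length := by
    have := hperm.length_eq
    simpa using this
  have hnd : (tabOf w).flatten.Nodup := (List.Perm.nodup_iff hperm).2 (List.nodup_range' _)
  apply List.ext_getElem
  · rw [length_wordOf, hN]
  · intro j hj hjw
    have hjN : j < (tabOf w).flatten.length := by rwa [length_wordOf] at hj
    rw [← List.getD_eq_getElem _ 0 hj, ← List.getD_eq_getElem _ 0 hjw, getD_wordOf hjN]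
    have hval : w.getD j 0 < numRows w := getD_lt_numRows hjw
    apply rIdx_unique hnd
    · rw [length_tabOf]; exact hval
    · rw [tabOf_getD_lt hval, mem_rowW]
      exact ⟨j, hjw, rfl, rfl⟩

theorem tabOf_wordOf {n : ℕ} {T : List (List ℕ)} (hT : IsSYT n T) : tabOf (wordOf T) = T := by
  obtain ⟨hrows, hlens, hcols, hperm⟩ := hT
  have hnd : T.flatten.Nodup := (List.Perm.nodup_iff hperm).2 (List.nodup_range' _)
  have hn : T.flatten.length = n := by
    have := hperm.length_eq
    simpa using this
  have hmemf : ∀ x, x ∈ T.flatten ↔ 1 ≤ x ∧ x ≤ n := by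
    intro x
    rw [hperm.mem_iff, List.mem_range']
    constructor
    · rintro ⟨i, hi, rfl⟩; omega
    · rintro ⟨h1, h2⟩; exact ⟨x - 1, by omega, by omega⟩
  set w := wordOf T with hwdef
  have hwlen : w.length = T.flatten.length := length_wordOf T
  have hwval : ∀ j, j < w.length → w.getD j 0 < T.length := by
    intro j hj
    rw [hwdef, getD_wordOf (by omega)]
    apply rIdx_lt
    rw [hmemf]
    omega
  have hrownn : ∀ r, r < T.length → ∃ x, x ∈ T.getD r [] := by
    intro r hr
    have hmem : T.getD r [] ∈ T := by
      rw [List.getD_eq_getElem _ _ hr]; exact List.getElem_mem _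
    obtain ⟨hne, _⟩ := hrows _ hmem
    rcases List.exists_mem_of_ne_nil _ hne with ⟨x, hx⟩
    exact ⟨x, hx⟩
  have hnum : numRows w = T.length := by
    apply le_antisymm
    · apply numRows_le
      intro x hx
      obtain ⟨j, hj, rfl⟩ := List.mem_iff_getElem.1 hx
      rw [← List.getD_eq_getElem _ 0 hj]
      exact hwval j hj
    · by_contra hcon
      push_neg at hcon
      obtain ⟨x, hx⟩ := hrownn (numRows w) hcon
      have hxf : x ∈ T.flatten := mem_flatten_iff_getD.2 ⟨_, hcon, hx⟩
      have hx1 : 1 ≤ x := ((hmemf x).1 hxf).1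
      have hxn : x ≤ n := ((hmemf x).1 hxf).2
      have hrx : rIdx T x = numRows w := rIdx_unique hnd hcon hx
      have hj : x - 1 < w.length := by omega
      have : w.getD (x-1) 0 = numRows w := by
        rw [hwdef, getD_wordOf (by omega)]
        have : x - 1 + 1 = x := by omega
        rw [this]; exact hrx
      have := getD_lt_numRows hj
      omega
  have hroweq : ∀ r, r < T.length → rowW w r = T.getD r [] := by
    intro r hr
    have hTr : T.getD r [] ∈ T := by
      rw [List.getD_eq_getElem _ _ hr]; exact List.getElem_mem _
    obtain ⟨_, hsort⟩ := hrows _ hTr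
    have hmemiff : ∀ x, x ∈ rowW w r ↔ x ∈ T.getD r [] := by
      intro x
      rw [mem_rowW]
      constructor
      · rintro ⟨j, hj, hjr, rfl⟩
        rw [hwdef, getD_wordOf (by omega)] at hjr
        have hjf : j + 1 ∈ T.flatten := by rw [hmemf]; omega
        have := rIdx_mem hjf
        rwa [hjr] at this
      · intro hx
        have hxf : x ∈ T.flatten := mem_flatten_iff_getD.2 ⟨r, hr, hx⟩
        have hx1 : 1 ≤ x := ((hmemf x).1 hxf).1
        have hxn : x ≤ n := ((hmemf x).1 hxf).2
        refine ⟨x - 1, by omega, ?_, by omega⟩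
        rw [hwdef, getD_wordOf (by omega)]
        have : x - 1 + 1 = x := by omega
        rw [this]
        exact rIdx_unique hnd hr hx
    refine List.Perm.eq_of_pairwise (le := (· < ·)) (fun _ _ _ _ h1 h2 => absurd (h1.trans h2) (lt_irrefl _)) (rowW_pairwise w r) hsort ?_
    apply List.perm_of_nodup_nodup_toFinset_eq
    · exact (rowW_pairwise w r).nodup
    · exact hsort.nodup
    · apply Finset.ext
      intro x
      rw [List.mem_toFinset, List.mem_toFinset]
      exact hmemiff x
  apply List.ext_getElem
  · rw [length_tabOf, hnum]
  · intro r h1 h2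
    have hr : r < T.length := h2
    have hrn : r < numRows w := by omega
    have : (tabOf w)[r] = rowW w r := by simp [tabOf]
    rw [this, hroweq r hr, List.getD_eq_getElem _ _ hr]

/-! ### final assembly -/

def tabEquiv (n : ℕ) : {T : List (List ℕ) // IsSYT n T ∧ IsRichardson T} ≃ WS n where
  toFun := fun T => ⟨wordOf T.1, by
      have hn : T.1.flatten.length = n := by
        have := T.2.1.2.2.2.length_eq
        simpa using this
      rw [length_wordOf, hn], (prw_iff_ok _).1 (prw_wordOf T.2.1 T.2.2)⟩
  invFun := fun w => ⟨tabOf w.1, by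
      have hp : PRW w.1 := (prw_iff_ok _).2 w.2.2
      have h1 := isSYT_tabOf hp
      rw [w.2.1] at h1
      exact ⟨h1, isRich_tabOf hp⟩⟩
  left_inv := fun T => Subtype.ext (tabOf_wordOf T.2.1)
  right_inv := fun w => Subtype.ext (wordOf_tabOf ((prw_iff_ok _).2 w.2.2))

theorem card_rich (n : ℕ) :
    Nat.card {T : List (List ℕ) // IsSYT n T ∧ IsRichardson T} = motzkin n :=
  (Nat.card_congr (tabEquiv n)).trans (card_WS n)

end RichW

/-- The number of Richardson tableaux of size `n` is the `n`-th Motzkin number. -/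
theorem card_richardson_eq_motzkin (n : ℕ) :
    Nat.card {T : List (List ℕ) // IsSYT n T ∧ IsRichardson T} = motzkin n :=
  RichW.card_rich n
end

section
/- For Dyck paths with 2n steps, Σ_D q^{maj(D)} = (1/[n+1]_q)·qbinom(2n,n), where maj(D) is the sum of positions i such that step i is a down step and step i+1 is an up step (valley points). -/
open Polynomial


/-- Gaussian binomial with integer lower index. -/
noncomputable def qbz : ℕ → ℤ → Polynomial ℤ
  | 0, k => if k = 0 then 1 else 0
  | n+1, k => if k < 0 then 0 else qbz n (k-1) + X ^ k.toNat * qbz n k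

lemma qbz_neg (n : ℕ) (k : ℤ) (h : k < 0) : qbz n k = 0 := by
  cases n with
  | zero => simp [qbz, h.ne]
  | succ n => simp [qbz, h]

lemma qbz_zero (n : ℕ) : qbz n 0 = 1 := by
  induction n with
  | zero => simp [qbz]
  | succ n ih => simp [qbz, ih, qbz_neg n (-1) (by norm_num)]

lemma qbz_gt (n : ℕ) : ∀ k : ℤ, (n : ℤ) < k → qbz n k = 0 := by
  induction n with
  | zero => intro k hk; simp only [qbz]; rw [if_neg]; omega
  | succ n ih =>
      intro k hk
      have h0 : ¬ k < 0 := by omega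
      simp only [qbz, if_neg h0]
      rw [ih (k-1) (by omega), ih k (by omega)]
      ring

lemma qbz_self (n : ℕ) : qbz n n = 1 := by
  induction n with
  | zero => simp [qbz]
  | succ n ih =>
      have h0 : ¬ ((n:ℤ)+1) < 0 := by omega
      simp only [qbz, Nat.cast_add, Nat.cast_one, if_neg h0]
      rw [show ((n:ℤ)+1-1) = n by ring, ih, qbz_gt n ((n:ℤ)+1) (by omega)]
      ring

lemma qbz_pascal1 (n : ℕ) (k : ℤ) (hk : 0 ≤ k) :
    qbz (n+1) k = qbz n (k-1) + X ^ k.toNat * qbz n k := by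
  simp [qbz, not_lt.mpr hk]

lemma qbz_pascal2 (n : ℕ) : ∀ k : ℤ, 0 ≤ k →
    qbz (n+1) k = X ^ ((n:ℤ)+1-k).toNat * qbz n (k-1) + qbz n k := by
  induction n with
  | zero =>
      intro k hk
      rcases eq_or_lt_of_le hk with h | h
      · rw [← h]; rw [qbz_zero, qbz_zero, qbz_neg 0 (0-1) (by norm_num)]; ring
      · rcases eq_or_lt_of_le (by omega : (1:ℤ) ≤ k) with h1 | h1
        · rw [← h1]
          rw [show ((1:ℤ)-1) = 0 by ring, qbz_zero, qbz_gt 0 1 (by norm_num),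
            show qbz 1 1 = qbz 1 ((1:ℕ):ℤ) by norm_num, qbz_self 1,
            show (((0:ℕ):ℤ)+1-1).toNat = 0 by omega]
          ring
        · rw [qbz_gt 1 k (by omega), qbz_gt 0 k (by omega), qbz_gt 0 (k-1) (by omega)]
          ring
  | succ n ih =>
      intro k hk
      rcases eq_or_lt_of_le hk with h | h
      · rw [← h]; simp only [qbz_zero]
        rw [qbz_neg (n+1) (0-1) (by norm_num)]
        ring
      · have hk1 : (1:ℤ) ≤ k := by omega
        rcases lt_or_ge ((n:ℤ)+2) k with h2 | h2
        · rw [qbz_gt (n+2) k (by push_cast; omega), qbz_gt (n+1) k (by push_cast; omega),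
            qbz_gt (n+1) (k-1) (by push_cast; omega)]
          ring
        · rcases eq_or_lt_of_le h2 with h3 | h3
          · -- k = n+2
            subst h3
            rw [show ((n:ℤ)+2) = ((n+2 : ℕ) : ℤ) by push_cast; ring, qbz_self (n+2)]
            rw [show (((n+2:ℕ):ℤ)-1) = ((n+1 : ℕ):ℤ) by push_cast; ring, qbz_self (n+1)]
            rw [qbz_gt (n+1) ((n+2:ℕ):ℤ) (by push_cast; omega)]
            have : (((n+1:ℕ):ℤ)+1-((n+2:ℕ):ℤ)).toNat = 0 := by push_cast; omega
            rw [this]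
            ring
          · -- 1 ≤ k ≤ n+1
            have e1 := qbz_pascal1 (n+1) k hk
            have e2 := ih (k-1) (by omega)
            have e3 := ih k hk
            have e4 := qbz_pascal1 n (k-1) (by omega)
            have e5 := qbz_pascal1 n k hk
            have ha : ((n:ℤ)+1-(k-1)).toNat = ((n:ℤ)+1+1-k).toNat := by omega
            rw [ha] at e2
            set c := ((n:ℤ)+1+1-k).toNat with hc
            have hpow : (X : Polynomial ℤ)^(k.toNat) * X^(((n:ℤ)+1-k).toNat)
                = X^c * X^((k-1).toNat) := by
              rw [← pow_add, ← pow_add]; congr 1; omega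
            have hcast : ((n+1:ℕ):ℤ)+1-k = ((n:ℤ)+1+1-k) := by push_cast; ring
            rw [hcast]
            linear_combination e1 + e2 + X^(k.toNat) * e3 - X^c * e4 - e5
              + hpow * qbz n (k-1)

lemma qbz_symm (n : ℕ) : ∀ k : ℤ, qbz n k = qbz n ((n:ℤ) - k) := by
  induction n with
  | zero => intro k; simp only [qbz]; rcases eq_or_ne k 0 with h|h <;> simp [h, sub_eq_zero]
           
  | succ n ih =>
      intro k
      rcases lt_or_ge k 0 with h | h
      · rw [qbz_neg _ k h, qbz_gt (n+1) (((n+1:ℕ):ℤ) - k) (by push_cast; omega)]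
      · rcases lt_or_ge ((n:ℤ)+1) k with h2 | h2
        · rw [qbz_gt (n+1) k (by push_cast; omega), qbz_neg _ (((n+1:ℕ):ℤ)-k) (by push_cast; omega)]
        · rw [qbz_pascal1 n k h, qbz_pascal2 n (((n+1:ℕ):ℤ) - k) (by push_cast; omega)]
          rw [ih (k-1), ih k]
          have e1 : (n:ℤ) - (k-1) = ((n+1:ℕ):ℤ) - k := by push_cast; ring
          have e2 : ((n:ℤ)+1-(((n+1:ℕ):ℤ) - k)).toNat = k.toNat := by push_cast; omega
          have e3 : ((n+1:ℕ):ℤ) - k - 1 = (n:ℤ) - k := by push_cast; ring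
          rw [e1, e2, e3]
          ring

lemma qInt_add (a b : ℕ) : qInt (a+b) = qInt b + X^b * qInt a := by
  unfold qInt
  rw [show a + b = b + a by ring, Finset.sum_range_add]
  congr 1
  rw [Finset.mul_sum]
  exact Finset.sum_congr rfl (fun i _ => by rw [← pow_add])

/-- `[a]_q! [b]_q! qbinom(a+b, b) = [a+b]_q!` -/
lemma qFact_qbz : ∀ m a b : ℕ, a + b = m →
    qFact a * qFact b * qbz (a+b) (b:ℤ) = qFact (a+b) := by
  intro m
  induction m with
  | zero => intro a b h
            obtain ⟨rfl, rfl⟩ : a = 0 ∧ b = 0 := by omega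
            simp [qFact, qbz_zero]
  | succ m ih =>
      intro a b h
      cases b with
      | zero => simp [qFact, qbz_zero]
      | succ b =>
        cases a with
        | zero => rw [show (0+(b+1)) = b+1 by ring, qbz_self (b+1)]
                  simp [qFact]
        | succ a =>
          have key : qbz (a+1+(b+1)) ((b+1:ℕ):ℤ)
              = qbz (a+1+b) ((b:ℕ):ℤ) + X^(b+1) * qbz (a+(b+1)) ((b+1:ℕ):ℤ) := by
            rw [show a+1+(b+1) = (a+1+b)+1 by ring, qbz_pascal1 _ _ (by positivity),
              show (((b+1:ℕ):ℤ)-1) = ((b:ℕ):ℤ) by push_cast; ring,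
              show (((b+1:ℕ):ℤ)).toNat = b+1 by omega,
              show a+1+b = a+(b+1) by ring]
          rw [key, mul_add]
          have ih1 := ih (a+1) b (by omega)
          have ih2 := ih a (b+1) (by omega)
          have hq : qInt ((a+1+b)+1) = qInt (b+1) + X^(b+1) * qInt (a+1) := by
            rw [show (a+1+b)+1 = (a+1)+(b+1) by ring, qInt_add]
          calc qFact (a+1) * qFact (b+1) * qbz (a+1+b) ((b:ℕ):ℤ)
                + qFact (a+1) * qFact (b+1) * (X^(b+1) * qbz (a+(b+1)) ((b+1:ℕ):ℤ))
              = qInt (b+1) * (qFact (a+1) * qFact b * qbz (a+1+b) ((b:ℕ):ℤ))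
                + X^(b+1) * qInt (a+1) * (qFact a * qFact (b+1) * qbz (a+(b+1)) ((b+1:ℕ):ℤ)) := by
                simp only [qFact]; ring
            _ = qInt (b+1) * qFact (a+1+b) + X^(b+1) * qInt (a+1) * qFact (a+(b+1)) := by
                rw [ih1, ih2]
            _ = qFact (a+1+(b+1)) := by
                rw [show a+(b+1) = a+1+b by ring,
                  show a+1+(b+1) = (a+1+b)+1 by ring, qFact, hq]
                ring

/-- `N(a,b) = qbinom(a+b,b) - q·qbinom(a+b,b-1)`, the q-ballot number. -/
noncomputable def NP (a b : ℕ) : Polynomial ℤ :=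
  qbz (a+b) (b:ℤ) - X * qbz (a+b) ((b:ℤ)-1)

noncomputable def NgP (a : ℕ) : ℕ → Polynomial ℤ
  | 0 => 0
  | b+1 => NP a b

lemma NP_zero (a : ℕ) : NP a 0 = 1 := by
  simp [NP, qbz_zero, qbz_neg a (-1) (by norm_num)]

lemma main_id (d c : ℕ) :
    NP (c+d+2) (c+1) - NP (c+d+2) c
      = NP (c+d+1) (c+1) - NP (c+d+1) c + X^(2*c+d+2) * NP (c+d+1) c := by
  have hm2 : c+d+2+(c+1) = (2*c+d+1)+1+1 := by ring
  have hm1 : c+d+2+c = (2*c+d+1)+1 := by ring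
  have hm1' : c+d+1+(c+1) = (2*c+d+1)+1 := by ring
  have hm0 : c+d+1+c = 2*c+d+1 := by ring
  set m := 2*c+d+1 with hm
  simp only [NP, hm2, hm1, hm1', hm0]
  have hc1 : ((c+1:ℕ):ℤ) = (c:ℤ)+1 := by push_cast; ring
  have hc1' : ((c+1:ℕ):ℤ)-1 = (c:ℤ) := by push_cast; ring
  rw [hc1']
  have e1 : qbz (m+1+1) ((c:ℤ)+1) = qbz (m+1) (c:ℤ) + X^(c+1) * qbz (m+1) ((c:ℤ)+1) := by
    rw [qbz_pascal1 (m+1) ((c:ℤ)+1) (by positivity),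
      show ((c:ℤ)+1-1) = (c:ℤ) by ring, show ((c:ℤ)+1).toNat = c+1 by omega]
  have e2 : qbz (m+1+1) (c:ℤ) = qbz (m+1) ((c:ℤ)-1) + X^c * qbz (m+1) (c:ℤ) := by
    rw [qbz_pascal1 (m+1) (c:ℤ) (by positivity), show ((c:ℤ)).toNat = c by omega]
  have e3 : qbz (m+1) ((c:ℤ)+1) = X^(c+d+1) * qbz m (c:ℤ) + qbz m ((c:ℤ)+1) := by
    rw [qbz_pascal2 m ((c:ℤ)+1) (by positivity),
      show ((c:ℤ)+1-1) = (c:ℤ) by ring,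
      show ((m:ℤ)+1-((c:ℤ)+1)).toNat = c+d+1 by omega]
  have e4 : qbz (m+1) (c:ℤ) = X^(c+d+2) * qbz m ((c:ℤ)-1) + qbz m (c:ℤ) := by
    rw [qbz_pascal2 m (c:ℤ) (by positivity),
      show ((m:ℤ)+1-(c:ℤ)).toNat = c+d+2 by omega]
  have e5' : qbz (m+1) ((c:ℤ)+1) = qbz m (c:ℤ) + X^(c+1) * qbz m ((c:ℤ)+1) := by
    rw [qbz_pascal1 m ((c:ℤ)+1) (by positivity),
      show ((c:ℤ)+1-1) = (c:ℤ) by ring, show ((c:ℤ)+1).toNat = c+1 by omega]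
  have e5 : qbz (m+1) (c:ℤ) = qbz m ((c:ℤ)-1) + X^c * qbz m (c:ℤ) := by
    rw [qbz_pascal1 m (c:ℤ) (by positivity), show ((c:ℤ)).toNat = c by omega]
  rw [hc1, e1, e2]
  have hx1 : (X:Polynomial ℤ)^(c+1) * qbz (m+1) ((c:ℤ)+1) - qbz (m+1) ((c:ℤ)+1)
      = X^(c+1) * (X^(c+d+1) * qbz m (c:ℤ) + qbz m ((c:ℤ)+1))
        - (qbz m (c:ℤ) + X^(c+1) * qbz m ((c:ℤ)+1)) := by
    nth_rewrite 1 [e3]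
    rw [e5']
  have hx2 : X * qbz (m+1) (c:ℤ) - (X:Polynomial ℤ)^(c+1) * qbz (m+1) (c:ℤ)
      = X * (qbz m ((c:ℤ)-1) + X^c * qbz m (c:ℤ))
        - X^(c+1) * (X^(c+d+2) * qbz m ((c:ℤ)-1) + qbz m (c:ℤ)) := by
    nth_rewrite 1 [e5]
    rw [e4]
  have hpow1 : (X:Polynomial ℤ)^(c+1) * X^(c+d+1) = X^(2*c+d+2) := by
    rw [← pow_add]; congr 1; ring
  have hpow2 : (X:Polynomial ℤ)^(c+1) * X^(c+d+2) = X * X^(2*c+d+2) := by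
    rw [← pow_add, ← pow_succ']; congr 1; ring
  linear_combination hx1 + hx2 + hpow1 * qbz m (c:ℤ) - hpow2 * qbz m ((c:ℤ)-1)

lemma corner_id (a : ℕ) : NP (a+1) (a+1) = NP (a+1) a := by
  have h1 : (a+1)+(a+1) = (2*a+1)+1 := by ring
  have h2 : (a+1)+a = 2*a+1 := by ring
  simp only [NP, h1, h2]
  have e1 : qbz ((2*a+1)+1) ((a+1:ℕ):ℤ)
      = qbz (2*a+1) (a:ℤ) + X^(a+1) * qbz (2*a+1) ((a:ℤ)+1) := by
    rw [qbz_pascal1 (2*a+1) _ (by positivity),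
      show (((a+1:ℕ):ℤ)-1) = (a:ℤ) by push_cast; ring,
      show (((a+1:ℕ):ℤ)).toNat = a+1 by omega,
      show ((a+1:ℕ):ℤ) = (a:ℤ)+1 by push_cast; ring]
  have e2 : qbz ((2*a+1)+1) (((a+1:ℕ):ℤ)-1)
      = qbz (2*a+1) ((a:ℤ)-1) + X^a * qbz (2*a+1) (a:ℤ) := by
    rw [show (((a+1:ℕ):ℤ)-1) = (a:ℤ) by push_cast; ring,
      qbz_pascal1 (2*a+1) _ (by positivity), show ((a:ℤ)).toNat = a by omega]
  have esym : qbz (2*a+1) ((a:ℤ)+1) = qbz (2*a+1) (a:ℤ) := by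
    rw [qbz_symm (2*a+1) ((a:ℤ)+1), show (((2*a+1:ℕ)):ℤ) - ((a:ℤ)+1) = (a:ℤ) by push_cast; ring]
  rw [e1, e2, esym]
  ring


def allW : ℕ → Finset (List Bool)
  | 0 => {[]}
  | L+1 => ((allW L).image (· ++ [true])) ∪ ((allW L).image (· ++ [false]))

lemma mem_allW : ∀ L (w : List Bool), w ∈ allW L ↔ w.length = L := by
  intro L
  induction L with
  | zero => intro w; simp [allW, List.length_eq_zero_iff]
  | succ L ih =>
      intro w
      simp only [allW, Finset.mem_union, Finset.mem_image]
      constructor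
      · rintro (⟨v, hv, rfl⟩ | ⟨v, hv, rfl⟩) <;> simp [(ih v).mp hv]
      · intro hw
        have hne : w ≠ [] := by intro h; simp [h] at hw
        have hw' : w.dropLast ++ [w.getLast hne] = w := List.dropLast_append_getLast hne
        have hl : w.dropLast.length = L := by
          simp [List.length_dropLast, hw]
        cases hgl : w.getLast hne
        · right; exact ⟨w.dropLast, (ih _).mpr hl, by rw [← hgl]; exact hw'⟩
        · left; exact ⟨w.dropLast, (ih _).mpr hl, by rw [← hgl]; exact hw'⟩

def prefOK (w : List Bool) : Prop :=
  ∀ k, ((w.take k).count false) ≤ ((w.take k).count true)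

open scoped Classical in
noncomputable def ballot (a b : ℕ) : Finset (List Bool) :=
  (allW (a+b)).filter
    (fun w => w.count true = a ∧ w.count false = b ∧
      ∀ k ∈ Finset.range (w.length+1), (w.take k).count false ≤ (w.take k).count true)

lemma mem_ballot (a b : ℕ) (w : List Bool) :
    w ∈ ballot a b ↔ w.length = a+b ∧ w.count true = a ∧ w.count false = b ∧ prefOK w := by
  simp only [ballot, Finset.mem_filter, mem_allW, Finset.mem_range]
  constructor
  · rintro ⟨h1, h2, h3, h4⟩
    refine ⟨h1, h2, h3, fun k => ?_⟩
    rcases le_or_gt k w.length with h | h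
    · exact h4 k (by omega)
    · have h5 := h4 w.length (by omega)
      rw [List.take_of_length_le le_rfl] at h5
      rw [List.take_of_length_le (le_of_lt h)]
      exact h5
  · rintro ⟨h1, h2, h3, h4⟩
    exact ⟨h1, h2, h3, fun k _ => h4 k⟩

lemma prefOK_append (w : List Bool) (c : Bool) :
    prefOK (w ++ [c]) ↔ prefOK w ∧ (w ++ [c]).count false ≤ (w ++ [c]).count true := by
  constructor
  · intro h
    refine ⟨fun k => ?_, ?_⟩
    · rcases le_or_gt k w.length with hk | hk
      · have := h k
        rwa [List.take_append_of_le_length hk] at this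
      · rw [List.take_of_length_le (by omega : w.length ≤ k)]
        have h2 := h w.length
        rwa [List.take_append_of_le_length le_rfl, List.take_length] at h2
    · have h2 := h (w.length+1)
      rwa [List.take_of_length_le (by simp)] at h2
  · rintro ⟨h1, h2⟩ k
    rcases le_or_gt k w.length with hk | hk
    · rw [List.take_append_of_le_length hk]; exact h1 k
    · rw [List.take_of_length_le (by simp; omega)]; exact h2

lemma count_tf (l : List Bool) : l.count true + l.count false = l.length := by
  induction l with
  | nil => simp
  | cons x t ih => cases x <;> simp [List.count_cons] <;> omega

lemma dyckMaj_append (w : List Bool) (c : Bool) :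
    dyckMaj (w ++ [c])
      = dyckMaj w + (if c = true ∧ w.getLast? = some false then w.length else 0) := by
  rcases eq_or_ne w [] with rfl | hne
  · simp [dyckMaj]
  · have hL : 0 < w.length := List.length_pos_iff.mpr hne
    obtain ⟨M, hM⟩ : ∃ M, w.length = M+1 := ⟨w.length-1, by omega⟩
    have hlen : (w ++ [c]).length - 1 = M+1 := by simp [hM]
    unfold dyckMaj
    rw [hlen, hM, Nat.add_sub_cancel]
    rw [Finset.sum_Icc_succ_top (by omega : 1 ≤ M+1)]
    have hmid : ∀ i ∈ Finset.Icc 1 M,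
        (if (w ++ [c]).getD (i-1) true = false ∧ (w ++ [c]).getD i false = true then i else 0)
          = (if w.getD (i-1) true = false ∧ w.getD i false = true then i else 0) := by
      intro i hi
      simp only [Finset.mem_Icc] at hi
      rw [List.getD_append _ _ _ _ (by omega), List.getD_append _ _ _ _ (by omega)]
    rw [Finset.sum_congr rfl hmid]
    congr 1
    -- top term
    have e1 : (w ++ [c]).getD ((M+1) - 1) true = w.getLast hne := by
      rw [show (M+1) - 1 = M by omega,
        List.getD_append _ _ _ _ (by omega), List.getD_eq_getElem w true (by omega),
        List.getLast_eq_getElem]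
      congr 1
      omega
    have e2 : (w ++ [c]).getD (M+1) false = c := by
      have : M+1 = w.length := hM.symm
      rw [this]
      simp [List.getD, List.getElem?_append_right]
    rw [e1, e2]
    have e3 : w.getLast? = some (w.getLast hne) := List.getLast?_eq_getLast hne
    cases c
    · simp
    · cases hgl : w.getLast hne
      · rw [e3, hgl]; simp
      · rw [e3, hgl]; simp

noncomputable def FP (a b : ℕ) : Polynomial ℤ := ∑ w ∈ ballot a b, X ^ dyckMaj w
noncomputable def gP (a b : ℕ) : Polynomial ℤ :=
  ∑ w ∈ (ballot a b).filter (fun w => w.getLast? = some false), X ^ dyckMaj w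
noncomputable def hP (a b : ℕ) : Polynomial ℤ :=
  ∑ w ∈ (ballot a b).filter (fun w => ¬ (w.getLast? = some false)), X ^ dyckMaj w

lemma FP_eq (a b : ℕ) : FP a b = gP a b + hP a b :=
  (Finset.sum_filter_add_sum_filter_not _ _ _).symm

lemma ballot_endD (a b : ℕ) (h : b+1 ≤ a) :
    (ballot a (b+1)).filter (fun w => w.getLast? = some false)
      = (ballot a b).image (· ++ [false]) := by
  ext w
  simp only [Finset.mem_filter, Finset.mem_image, mem_ballot]
  constructor
  · rintro ⟨⟨h1, h2, h3, h4⟩, h5⟩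
    have hne : w ≠ [] := by intro h'; rw [h'] at h5; simp at h5
    have hgl : w.getLast hne = false := by
      have e := List.getLast?_eq_getLast hne
      rw [h5] at e; exact (Option.some_injective _ e.symm)
    have hw : w.dropLast ++ [false] = w := by
      rw [← hgl]; exact List.dropLast_append_getLast hne
    refine ⟨w.dropLast, ⟨?_, ?_, ?_, ?_⟩, hw⟩
    · rw [List.length_dropLast, h1]; omega
    · have h2' := h2; rw [← hw] at h2'; simpa [List.count_append] using h2'
    · have h3' := h3; rw [← hw] at h3'; simp [List.count_append] at h3'; omega
    · have h4' : prefOK (w.dropLast ++ [false]) := by rw [hw]; exact h4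
      exact ((prefOK_append _ _).mp h4').1
  · rintro ⟨v, ⟨h1, h2, h3, h4⟩, rfl⟩
    refine ⟨⟨?_, ?_, ?_, ?_⟩, ?_⟩
    · simp; omega
    · simp [List.count_append, h2]
    · simp [List.count_append, h3]
    · refine (prefOK_append _ _).mpr ⟨h4, ?_⟩
      simp [List.count_append, h2, h3]; omega
    · simp

lemma ballot_endU (a b : ℕ) :
    (ballot (a+1) b).filter (fun w => ¬ (w.getLast? = some false))
      = (ballot a b).image (· ++ [true]) := by
  ext w
  simp only [Finset.mem_filter, Finset.mem_image, mem_ballot]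
  constructor
  · rintro ⟨⟨h1, h2, h3, h4⟩, h5⟩
    have hne : w ≠ [] := by intro h'; rw [h'] at h1; simp at h1; omega
    have hgl : w.getLast hne = true := by
      have e := List.getLast?_eq_getLast hne
      cases hb : w.getLast hne
      · rw [hb] at e; exact absurd e h5
      · rfl
    have hw : w.dropLast ++ [true] = w := by
      rw [← hgl]; exact List.dropLast_append_getLast hne
    refine ⟨w.dropLast, ⟨?_, ?_, ?_, ?_⟩, hw⟩
    · rw [List.length_dropLast, h1]; omega
    · have h2' := h2; rw [← hw] at h2'; simp [List.count_append] at h2'; omega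
    · have h3' := h3; rw [← hw] at h3'; simpa [List.count_append] using h3'
    · have h4' : prefOK (w.dropLast ++ [true]) := by rw [hw]; exact h4
      exact ((prefOK_append _ _).mp h4').1
  · rintro ⟨v, ⟨h1, h2, h3, h4⟩, rfl⟩
    refine ⟨⟨?_, ?_, ?_, ?_⟩, ?_⟩
    · simp; omega
    · simp [List.count_append, h2]
    · simp [List.count_append, h3]
    · refine (prefOK_append _ _).mpr ⟨h4, ?_⟩
      have hb := h4 v.length
      rw [List.take_length] at hb
      simp [List.count_append, h2, h3]; omega
    · simp

lemma gP_succ (a b : ℕ) (h : b+1 ≤ a) : gP a (b+1) = FP a b := by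
  unfold gP FP
  rw [ballot_endD a b h, Finset.sum_image (fun x _ y _ hxy => by simpa using hxy)]
  apply Finset.sum_congr rfl
  intro w _
  rw [dyckMaj_append]
  simp

lemma hP_succ (a b : ℕ) : hP (a+1) b = hP a b + X^(a+b) * gP a b := by
  unfold hP
  rw [ballot_endU a b, Finset.sum_image (fun x _ y _ hxy => by simpa using hxy),
    ← Finset.sum_filter_add_sum_filter_not (ballot a b) (fun w => w.getLast? = some false)]
  conv_rhs => rw [add_comm]
  congr 1
  · unfold gP
    rw [Finset.mul_sum]
    apply Finset.sum_congr rfl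
    intro w hw
    rw [Finset.mem_filter, mem_ballot] at hw
    rw [dyckMaj_append]
    simp only [hw.2, and_true, if_pos trivial, hw.1.1]
    rw [pow_add]
    ring
  · apply Finset.sum_congr rfl
    intro w hw
    rw [Finset.mem_filter] at hw
    rw [dyckMaj_append]
    simp [hw.2]

lemma gP_zero (a : ℕ) : gP a 0 = 0 := by
  unfold gP
  convert Finset.sum_empty
  rw [Finset.eq_empty_iff_forall_notMem]
  intro w hw
  rw [Finset.mem_filter, mem_ballot] at hw
  obtain ⟨⟨h1, h2, h3, h4⟩, h5⟩ := hw
  have hmem : false ∈ w := List.mem_of_mem_getLast? (by rw [h5]; rfl)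
  rw [← List.count_pos_iff] at hmem
  omega

lemma hP_zz : hP 0 0 = 1 := by
  unfold hP
  have hb : (ballot 0 0).filter (fun w => ¬ (w.getLast? = some false)) = {[]} := by
    ext w
    simp only [Finset.mem_filter, mem_ballot, Finset.mem_singleton]
    constructor
    · rintro ⟨⟨h1, _, _, _⟩, _⟩
      exact List.length_eq_zero_iff.mp (by omega)
    · rintro rfl
      refine ⟨⟨by simp, by simp, by simp, fun k => by simp⟩, by simp⟩
  rw [hb]
  simp [dyckMaj]

lemma hP_diag (a : ℕ) : hP (a+1) (a+1) = 0 := by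
  unfold hP
  convert Finset.sum_empty
  rw [Finset.eq_empty_iff_forall_notMem]
  intro w hw
  rw [Finset.mem_filter, mem_ballot] at hw
  obtain ⟨⟨h1, h2, h3, h4⟩, h5⟩ := hw
  have hne : w ≠ [] := by intro h'; rw [h'] at h1; simp at h1
  have hgl : w.getLast hne = true := by
    cases hb : w.getLast hne
    · exact absurd (by rw [List.getLast?_eq_getLast hne, hb]) h5
    · rfl
  have hw' : w.dropLast ++ [true] = w := by
    rw [← hgl]; exact List.dropLast_append_getLast hne
  have htake : w.take (w.length - 1) = w.dropLast := (List.dropLast_eq_take (l := w)).symm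
  have hk := h4 (w.length - 1)
  rw [htake] at hk
  have hc2 : w.dropLast.count true + 1 = a+1 := by
    rw [← hw'] at h2; simpa [List.count_append] using h2
  have hc3 : w.dropLast.count false = a+1 := by
    rw [← hw'] at h3; simpa [List.count_append] using h3
  omega

theorem gh_closed : ∀ s a b : ℕ, a + b = s → b ≤ a →
    (gP a b = NgP a b) ∧ (b < a → hP a b = NP a b - NgP a b)
      ∧ (0 < a → a = b → hP a b = 0) := by
  intro s
  induction s using Nat.strong_induction_on with
  | _ s ih =>
  intro a b hs hba
  have hg : gP a b = NgP a b := by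
    cases b with
    | zero => rw [gP_zero]; rfl
    | succ c =>
        have ihb := ih (a+c) (by omega) a c rfl (by omega)
        have hF : FP a c = NP a c := by
          rw [FP_eq, ihb.1, ihb.2.1 (by omega)]
          ring
        rw [gP_succ a c (by omega), hF]
        rfl
  refine ⟨hg, ?_, ?_⟩
  · intro hlt
    obtain ⟨a', rfl⟩ : ∃ a', a = a'+1 := ⟨a-1, by omega⟩
    have iha := ih (a'+b) (by omega) a' b rfl (by omega)
    rw [hP_succ a' b, iha.1]
    rcases lt_or_eq_of_le (show b ≤ a' by omega) with hba' | hba'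
    · rw [iha.2.1 hba']
      cases b with
      | zero => simp [NgP, NP_zero]
      | succ c =>
          obtain ⟨d, rfl⟩ : ∃ d, a' = c+d+2 := ⟨a'-c-2, by omega⟩
          show NP (c+d+2) (c+1) - NP (c+d+2) c + X^(c+d+2+(c+1)) * NP (c+d+2) c
            = NP (c+d+2+1) (c+1) - NP (c+d+2+1) c
          have hmain := main_id (d+1) c
          rw [show c+(d+1)+2 = c+d+2+1 by ring, show c+(d+1)+1 = c+d+2 by ring,
            show 2*c+(d+1)+2 = c+d+2+(c+1) by ring] at hmain
          linear_combination -hmain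
    · subst hba'
      cases b with
      | zero =>
          rw [hP_zz]
          simp [NgP, NP_zero]
      | succ e =>
          rw [iha.2.2 (by omega) rfl]
          show (0:Polynomial ℤ) + X^((e+1)+(e+1)) * NP (e+1) e
            = NP (e+1+1) (e+1) - NP (e+1+1) e
          have hmain := main_id 0 e
          rw [show e+0+2 = e+1+1 by ring, show e+0+1 = e+1 by ring,
            show 2*e+0+2 = (e+1)+(e+1) by ring] at hmain
          have hcor := corner_id e
          linear_combination -hmain - hcor
  · intro ha hab
    obtain ⟨e, rfl⟩ : ∃ e, a = e+1 := ⟨a-1, by omega⟩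
    rw [← hab]
    exact hP_diag e

lemma FP_diag (m : ℕ) : FP (m+1) (m+1) = NP (m+1) m := by
  have h := gh_closed (2*(m+1)) (m+1) (m+1) (by ring) le_rfl
  rw [FP_eq, h.1, h.2.2 (by omega) rfl, add_zero]
  rfl

lemma qInt_one : qInt 1 = 1 := by simp [qInt]

lemma qInt_succ (m : ℕ) : qInt (m+1) = qInt m + X^m := Finset.sum_range_succ _ _

lemma qInt_succ' (m : ℕ) : qInt (m+1) = X * qInt m + 1 := by
  unfold qInt
  rw [geom_sum_succ]

lemma main_alg (m : ℕ) :
    qFact (m+1+1) * qFact (m+1) * NP (m+1) m = qFact (2*(m+1)) := by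
  cases m with
  | zero =>
      rw [NP_zero]
      show qFact 2 * qFact 1 * 1 = qFact 2
      simp [qFact, qInt_one]
  | succ e =>
      set m := e+1 with hm
      have hidx : (m+1)+m = 2*m+1 := by omega
      unfold NP
      rw [hidx]
      have t1 : qFact (m+1) * qFact m * qbz ((m+1)+m) ((m:ℕ):ℤ) = qFact (2*m+1) := by
        rw [qFact_qbz ((m+1)+m) (m+1) m rfl, hidx]
      rw [hidx] at t1
      have t2 : qFact (m+2) * qFact (e:ℕ) * qbz ((m+2)+e) ((e:ℕ):ℤ) = qFact (2*m+1) := by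
        rw [qFact_qbz ((m+2)+e) (m+2) e rfl, show (m+2)+e = 2*m+1 by omega]
      rw [show (m+2)+e = 2*m+1 by omega] at t2
      have hz : ((m:ℕ):ℤ) - 1 = ((e:ℕ):ℤ) := by rw [hm]; push_cast; ring
      rw [hz]
      have hf2 : qFact (m+1+1) = qFact (m+1) * qInt (m+2) := by
        show qFact ((m+1)+1) = _
        rw [qFact]
      have hf1 : qFact (m+1) = qFact m * qInt (m+1) := rfl
      have hf0 : qFact m = qFact e * qInt m := by rw [hm]; rfl
      have hfin : qFact (2*(m+1)) = qFact (2*m+1) * qInt (2*m+2) := by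
        rw [show 2*(m+1) = (2*m+1)+1 by ring, qFact]
      have hgeom : qInt (m+2) - X * qInt m = 1 + X^(m+1) := by
        rw [show m+2 = (m+1)+1 by ring, qInt_succ (m+1), qInt_succ' m]
        ring
      have hsplit : qInt (2*m+2) = qInt (m+1) * (1 + X^(m+1)) := by
        rw [show 2*m+2 = (m+1)+(m+1) by ring, qInt_add, qInt_succ m]
        ring
      have E1 : qFact (m+1) = qFact e * qInt m * qInt (m+1) := by
        rw [hf1, hf0]
      have E2 : qFact (m+1+1) = qFact e * qInt m * qInt (m+1) * qInt (m+2) := by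
        rw [hf2, E1]
      have T1 := t1
      rw [E1, hf0] at T1
      have T2 := t2
      rw [show m+2 = m+1+1 by ring, E2] at T2
      rw [E2, E1, hfin, hsplit]
      linear_combination qInt (m+1) * qInt (m+2) * T1 - X * qInt m * qInt (m+1) * T2
        + qFact (2*m+1) * qInt (m+1) * hgeom

lemma isDyck_iff (n : ℕ) (D : List Bool) : IsDyckWord n D ↔ D ∈ ballot n n := by
  rw [mem_ballot]
  constructor
  · rintro ⟨h1, h2, h3⟩
    have hct := count_tf D
    exact ⟨by omega, by omega, by omega, h2⟩
  · rintro ⟨h1, h2, h3, h4⟩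
    exact ⟨by omega, h4, by omega⟩

lemma dyckMaj_le (w : List Bool) : dyckMaj w ≤ w.length * w.length := by
  unfold dyckMaj
  calc ∑ i ∈ Finset.Icc 1 (w.length - 1),
        (if w.getD (i-1) true = false ∧ w.getD i false = true then i else 0)
      ≤ ∑ i ∈ Finset.Icc 1 (w.length - 1), w.length := by
        apply Finset.sum_le_sum
        intro i hi
        simp only [Finset.mem_Icc] at hi
        split <;> omega
    _ = (w.length - 1 + 1 - 1) * w.length := by
        rw [Finset.sum_const, Nat.card_Icc, smul_eq_mul]
    _ ≤ w.length * w.length := Nat.mul_le_mul (by omega) le_rfl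

lemma sum_card_eq_FP (n : ℕ) :
    (∑ m ∈ Finset.range (2*n*(2*n) + 1),
      (Nat.card {D : List Bool // IsDyckWord n D ∧ dyckMaj D = m} : Polynomial ℤ) * X ^ m)
    = FP n n := by
  unfold FP
  rw [← Finset.sum_fiberwise_of_maps_to (t := Finset.range (2*n*(2*n) + 1)) (g := dyckMaj)
    (fun w hw => by
      have hlen : w.length = n + n := ((mem_ballot n n w).mp hw).1
      have hle := dyckMaj_le w
      rw [hlen] at hle
      have he : (n+n)*(n+n) = 2*n*(2*n) := by ring
      rw [he] at hle
      rw [Finset.mem_range]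
      omega)
    (fun w => (X : Polynomial ℤ) ^ dyckMaj w)]
  apply Finset.sum_congr rfl
  intro m _
  have hterm : ∀ w ∈ (ballot n n).filter (fun w => dyckMaj w = m),
      (X : Polynomial ℤ) ^ dyckMaj w = X ^ m := fun w hw => by
    rw [(Finset.mem_filter.mp hw).2]
  rw [Finset.sum_congr rfl hterm, Finset.sum_const, nsmul_eq_mul]
  congr 1
  have hcard : Nat.card {D : List Bool // IsDyckWord n D ∧ dyckMaj D = m}
      = ((ballot n n).filter (fun w => dyckMaj w = m)).card := by
    rw [← Nat.card_eq_finsetCard]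
    apply Nat.card_congr
    exact Equiv.subtypeEquivRight (fun D => by
      rw [Finset.mem_filter, isDyck_iff])
  rw [hcard]


open Polynomial in
/-- MacMahon's identity: `∑_D q^{maj D}` over Dyck paths with `2n` steps equals
`(1/[n+1]_q) · qbinom(2n, n) = [2n]_q!/([n+1]_q! [n]_q!)` (stated multiplied out). -/
theorem dyck_maj_qcatalan (n : ℕ) :
    qFact (n+1) * qFact n *
      (∑ m ∈ Finset.range (2*n*(2*n) + 1),
        (Nat.card {D : List Bool // IsDyckWord n D ∧ dyckMaj D = m} : Polynomial ℤ) * X ^ m) =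
    qFact (2*n) := by
  rw [sum_card_eq_FP]
  cases n with
  | zero =>
      rw [FP_eq, gP_zero, hP_zz]
      show qFact 1 * qFact 0 * (0 + 1) = qFact 0
      simp [qFact, qInt_one]
  | succ m =>
      rw [FP_diag m]
      exact main_alg m
end
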